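/- arXiv:2412.20852 — 3 statements merged into one kernel-verified Lean document; each statement's English description precedes it below -/
import Mathlib

section
/- For the (ρ,ν)-TBRW urn: if the probability that color 0 is drawn only a finite number of times is strictly positive, then the probability that color 0 is never drawn is strictly positive. -/
/-!
Fix the numbers `a 1, …, a M` of balls added at steps `1, …, M`, so that `c i = a 1 + ⋯ + a i`
balls of nonzero color are present at the draw of step `i`. The event that these numbers are added
and that color `0` is not drawn at the steps of `S ⊆ [1, M]` has probability
`∏ ν (a i) · ∏_{i ∈ S} c i / (ρ + c i)`. If color `0` is drawn finitely often with positive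
probability, it is not drawn after some step `N` with positive probability. Replacing `a 1 = 0` by
some `b ≥ 1` with `ν b > 0` costs at most a factor `ν 0 / ν b` and only increases every `c i`, so we
may assume `a 1 ≥ 1`; then every `c i ≥ 1`, and forbidding color `0` at steps `1, …, N` as well
costs at most a factor `(1 / (ρ + 1)) ^ N`. Letting `M → ∞` gives the claim.
-/

open MeasureTheory ProbabilityTheory Filter
open scoped ENNReal NNReal Topology

namespace TBRWPaper

/-- The mean `ν̄ = Σ_k k ν(k)` of the offspring distribution `ν`, in `ℝ≥0∞`. -/
noncomputable def nubar (ν : PMF ℕ) : ℝ≥0∞ := ∑' k : ℕ, (k : ℝ≥0∞) * ν k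

variable {Ω : Type*} [MeasurableSpace Ω]

/-- Number of non-zero colors present in the urn after the addition phase of step `n`
(`ζ i` being the number of balls added at step `i`; colors are numbered consecutively,
so the colors present at that moment are exactly `0, 1, …, urnColors ζ n ω`). -/
def urnColors (ζ : ℕ → Ω → ℕ) (n : ℕ) (ω : Ω) : ℕ := ∑ i ∈ Finset.Icc 1 n, ζ i ω

/-- σ-algebra of the urn history up to (and including) step `n`. -/
def urnPast (ζ B : ℕ → Ω → ℕ) (n : ℕ) : MeasurableSpace Ω :=
  (⨆ i ∈ Finset.Icc 1 n, MeasurableSpace.comap (ζ i) ⊤) ⊔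
  ⨆ i ∈ Finset.Icc 1 n, MeasurableSpace.comap (B i) ⊤

/-- σ-algebra of the urn history just before the draw of step `n` (it includes the
addition phase of step `n`). -/
def urnHist (ζ B : ℕ → Ω → ℕ) (n : ℕ) : MeasurableSpace Ω :=
  urnPast ζ B (n - 1) ⊔ MeasurableSpace.comap (ζ n) ⊤

/-- `IsUrn ρ ν P ζ B` asserts that, under the probability measure `P`, the pair of
processes `(ζ n, B n)_{n ≥ 1}` performs the `(ρ,ν)`-TBRW urn process: at each step
`n ≥ 1`, first `ζ n ∼ ν` new balls (with brand new colors, numbered consecutively) are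
added to the urn independently of the past, then a ball is drawn from the urn with
probability proportional to its weight (color `0` having weight `ρ`, every other ball
weight `1`), its color `B n` is recorded, and it is returned to the urn. -/
structure IsUrn (ρ : ℝ) (ν : PMF ℕ) (P : Measure Ω) (ζ B : ℕ → Ω → ℕ) : Prop where
  prob : IsProbabilityMeasure P
  measζ : ∀ n, Measurable (ζ n)
  measB : ∀ n, Measurable (B n)
  ζ_law : ∀ n, 1 ≤ n → P.map (ζ n) = ν.toMeasure
  ζ_indep : ∀ n, 1 ≤ n → Indep (MeasurableSpace.comap (ζ n) ⊤) (urnPast ζ B (n - 1)) P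
  B_le : ∀ n ω, 1 ≤ n → B n ω ≤ urnColors ζ n ω
  draw_zero : ∀ n, 1 ≤ n → ∀ c : ℕ, ∀ H : Set Ω, MeasurableSet[urnHist ζ B n] H →
      P (H ∩ {ω | urnColors ζ n ω = c} ∩ {ω | B n ω = 0}) =
        ENNReal.ofReal (ρ / (ρ + c)) * P (H ∩ {ω | urnColors ζ n ω = c})
  draw_pos : ∀ n, 1 ≤ n → ∀ c j : ℕ, 1 ≤ j → j ≤ c → ∀ H : Set Ω,
      MeasurableSet[urnHist ζ B n] H →
      P (H ∩ {ω | urnColors ζ n ω = c} ∩ {ω | B n ω = j}) =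
        ENNReal.ofReal (1 / (ρ + c)) * P (H ∩ {ω | urnColors ζ n ω = c})


open Finset

noncomputable def nonzeroDrawProb (ρ : ℝ) (c : ℕ) : ℝ≥0∞ := ENNReal.ofReal (c / (ρ + c))

theorem nonzeroDrawProb_mono {ρ : ℝ} (hρ : 0 < ρ) : Monotone (nonzeroDrawProb ρ) := by
  intro c c' hc
  apply ENNReal.ofReal_le_ofReal
  have : (c : ℝ) ≤ c' := by exact_mod_cast hc
  rw [div_le_div_iff₀ (by positivity) (by positivity)]
  nlinarith

theorem nonzeroDrawProb_one_ne_zero {ρ : ℝ} (hρ : 0 < ρ) : nonzeroDrawProb ρ 1 ≠ 0 := by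
  simp only [nonzeroDrawProb, ne_eq, ENNReal.ofReal_eq_zero, not_le]
  positivity

theorem ofReal_div_add_nonzeroDrawProb {ρ : ℝ} (hρ : 0 < ρ) (c : ℕ) :
    ENNReal.ofReal (ρ / (ρ + c)) + nonzeroDrawProb ρ c = 1 := by
  rw [nonzeroDrawProb, ← ENNReal.ofReal_add (by positivity) (by positivity), ← add_div,
    div_self (by positivity), ENNReal.ofReal_one]

theorem PMF.exists_pos_apply_ne_zero {ν : PMF ℕ} (hν0 : ν 0 < 1) : ∃ b, 1 ≤ b ∧ ν b ≠ 0 := by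
  by_contra! hν
  have : ∑' b, ν b = ν 0 := tsum_eq_single 0 fun b hb => hν b (Nat.one_le_iff_ne_zero.2 hb)
  exact hν0.ne (this ▸ ν.tsum_coe)

section Events

variable {Ω : Type*}

def cyl (ζ : ℕ → Ω → ℕ) (S : Finset ℕ) (a : ℕ → ℕ) : Set Ω := {ω | ∀ i ∈ S, ζ i ω = a i}

def noZeroDraw (B : ℕ → Ω → ℕ) (S : Finset ℕ) : Set Ω := {ω | ∀ i ∈ S, B i ω ≠ 0}

def noZeroDrawFrom (B : ℕ → Ω → ℕ) (N : ℕ) : Set Ω := {ω | ∀ n, N ≤ n → B n ω ≠ 0}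

theorem measurableSet_cyl {m : MeasurableSpace Ω} {ζ : ℕ → Ω → ℕ} {S : Finset ℕ}
    (hζ : ∀ i ∈ S, Measurable[m] (ζ i)) (a : ℕ → ℕ) : MeasurableSet[m] (cyl ζ S a) := by
  simp only [cyl, Set.ofPred_forall]
  exact Finset.measurableSet_biInter _ fun i hi => hζ i hi (measurableSet_singleton _)

theorem measurableSet_noZeroDraw {m : MeasurableSpace Ω} {B : ℕ → Ω → ℕ} {S : Finset ℕ}
    (hB : ∀ i ∈ S, Measurable[m] (B i)) : MeasurableSet[m] (noZeroDraw B S) := by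
  simp only [noZeroDraw, Set.ofPred_forall]
  exact Finset.measurableSet_biInter _ fun i hi => hB i hi (measurableSet_singleton 0).compl

theorem cyl_Icc_succ (ζ : ℕ → Ω → ℕ) (M : ℕ) (a : ℕ → ℕ) :
    cyl ζ (Icc 1 (M + 1)) a = ζ (M + 1) ⁻¹' {a (M + 1)} ∩ cyl ζ (Icc 1 M) a := by
  ext ω
  simp only [cyl, Set.mem_ofPred_eq, Set.mem_inter_iff, Set.mem_preimage, Set.mem_singleton_iff,
    ← insert_Icc_right_eq_Icc_add_one (Nat.le_add_left 1 M), forall_mem_insert]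

theorem noZeroDraw_insert (B : ℕ → Ω → ℕ) (n : ℕ) (S : Finset ℕ) :
    noZeroDraw B (insert n S) = {ω | B n ω ≠ 0} ∩ noZeroDraw B S := by
  ext ω
  simp [noZeroDraw]

theorem noZeroDraw_anti (B : ℕ → Ω → ℕ) : Antitone (noZeroDraw B) :=
  fun _ _ hST _ hω i hi => hω i (hST hi)

theorem noZeroDrawFrom_eq_iInter (B : ℕ → Ω → ℕ) (N : ℕ) :
    noZeroDrawFrom B N = ⋂ M, noZeroDraw B (Icc N M) := by
  ext ω
  simp only [noZeroDrawFrom, noZeroDraw, Set.mem_ofPred_eq, Set.mem_iInter, mem_Icc]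
  exact ⟨fun hω _ i hi => hω i hi.1, fun hω n hn => hω n n ⟨hn, le_rfl⟩⟩

theorem cyl_insert_update (ζ : ℕ → Ω → ℕ) {j : ℕ} {T : Finset ℕ} (hj : j ∉ T) (a : ℕ → ℕ)
    (k : ℕ) :
    cyl ζ (insert j T) (Function.update a j k) = ζ j ⁻¹' {k} ∩ cyl ζ T a := by
  ext ω
  simp only [cyl, Set.mem_ofPred_eq, Set.mem_inter_iff, Set.mem_preimage, Set.mem_singleton_iff,
    forall_mem_insert, Function.update_self]
  exact and_congr_right' <| forall₂_congr fun i hi => by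
    rw [Function.update_of_ne (ne_of_mem_of_not_mem hi hj)]

theorem exists_measure_noZeroDrawFrom_pos [MeasurableSpace Ω] {P : Measure Ω} {B : ℕ → Ω → ℕ}
    (hpos : 0 < P {ω | {n : ℕ | 1 ≤ n ∧ B n ω = 0}.Finite}) :
    ∃ N, 0 < P (noZeroDrawFrom B (N + 1)) := by
  by_contra! hN
  refine hpos.ne' (measure_mono_null (fun ω hω => ?_)
    (measure_iUnion_null fun N => nonpos_iff_eq_zero.1 (hN N)))
  obtain ⟨m, hm⟩ := Set.Finite.bddAbove hω
  exact Set.mem_iUnion.2 ⟨m, fun n hn h0 => by have := hm ⟨by omega, h0⟩; omega⟩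

theorem measure_noZeroDrawFrom_eq_iInf [MeasurableSpace Ω] {P : Measure Ω} [IsFiniteMeasure P]
    {B : ℕ → Ω → ℕ} (hB : ∀ i, Measurable (B i)) (N : ℕ) :
    P (noZeroDrawFrom B N) = ⨅ M, P (noZeroDraw B (Icc N M)) := by
  rw [noZeroDrawFrom_eq_iInter]
  exact Antitone.measure_iInter (fun M M' hMM' => noZeroDraw_anti B (Icc_subset_Icc_right hMM'))
    (fun M => (measurableSet_noZeroDraw fun i _ => hB i).nullMeasurableSet)
    ⟨0, measure_ne_top _ _⟩

theorem measure_eq_tsum_cyl_inter [MeasurableSpace Ω] {P : Measure Ω} {ζ : ℕ → Ω → ℕ}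
    (hζ : ∀ i, Measurable (ζ i)) (S : Finset ℕ) (E : Set Ω) :
    P E = ∑' v : S → ℕ, P (cyl ζ S (Function.extend Subtype.val v 0) ∩ E) := by
  have hcyl : ∀ v : S → ℕ,
      cyl ζ S (Function.extend Subtype.val v 0) = (fun ω (i : S) => ζ i ω) ⁻¹' {v} := by
    intro v
    ext ω
    simp only [cyl, Set.mem_ofPred_eq, Set.mem_preimage, Set.mem_singleton_iff, funext_iff,
      Subtype.forall]
    exact forall₂_congr fun i hi => by rw [Subtype.val_injective.extend_apply v 0 ⟨i, hi⟩]
  have hmeas : ∀ v : S → ℕ, MeasurableSet ((fun ω (i : S) => ζ i ω) ⁻¹' {v}) := fun v =>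
    hcyl v ▸ measurableSet_cyl (fun i _ => hζ i) _
  simp_rw [hcyl, ← Measure.restrict_apply (hmeas _)]
  rw [← tsum_univ, tsum_measure_preimage_singleton Set.countable_univ fun v _ => hmeas v,
    Set.preimage_univ, Measure.restrict_apply_univ]

theorem urnColors_eq_of_mem_cyl {ζ : ℕ → Ω → ℕ} {n : ℕ} {a : ℕ → ℕ} {ω : Ω}
    (hω : ω ∈ cyl ζ (Icc 1 n) a) : urnColors ζ n ω = ∑ i ∈ Icc 1 n, a i :=
  sum_congr rfl hω

end Events

section Urn

variable {Ω : Type*} {ζ B : ℕ → Ω → ℕ}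

theorem measurable_ζ_urnPast {n i : ℕ} (hi : i ∈ Icc 1 n) : Measurable[urnPast ζ B n] (ζ i) :=
  measurable_iff_comap_le.2 <| le_sup_of_le_left <|
    le_iSup₂ (f := fun i (_ : i ∈ Icc 1 n) => MeasurableSpace.comap (ζ i) ⊤) i hi

theorem measurable_B_urnPast {n i : ℕ} (hi : i ∈ Icc 1 n) : Measurable[urnPast ζ B n] (B i) :=
  measurable_iff_comap_le.2 <| le_sup_of_le_right <|
    le_iSup₂ (f := fun i (_ : i ∈ Icc 1 n) => MeasurableSpace.comap (B i) ⊤) i hi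

variable [MeasurableSpace Ω] {ρ : ℝ} {ν : PMF ℕ} {P : Measure Ω}

theorem IsUrn.measure_preimage_inter (h : IsUrn ρ ν P ζ B) {n : ℕ} {K : Set Ω}
    (hK : MeasurableSet[urnPast ζ B n] K) (k : ℕ) :
    P (ζ (n + 1) ⁻¹' {k} ∩ K) = ν k * P K := by
  have hind := h.ζ_indep (n + 1) (Nat.le_add_left 1 n)
  rw [Nat.add_sub_cancel] at hind
  rw [(Indep_iff _ _ _).1 hind _ _ ⟨{k}, trivial, rfl⟩ hK,
    ← PMF.toMeasure_apply_singleton ν k (measurableSet_singleton k),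
    ← h.ζ_law (n + 1) (Nat.le_add_left 1 n),
    Measure.map_apply (h.measζ _) (measurableSet_singleton k)]

theorem IsUrn.measure_inter_draw_ne_zero (h : IsUrn ρ ν P ζ B) (hρ : 0 < ρ) {n c : ℕ}
    (hn : 1 ≤ n) {H : Set Ω} (hH : MeasurableSet[urnHist ζ B n] H)
    (hHc : H ⊆ {ω | urnColors ζ n ω = c}) :
    P (H ∩ {ω | B n ω ≠ 0}) = nonzeroDrawProb ρ c * P H := by
  have := h.prob
  have hzero := h.draw_zero n hn c H hH
  rw [Set.inter_eq_left.2 hHc] at hzero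
  have hsplit := measure_inter_add_sdiff (μ := P) H (h.measB n (measurableSet_singleton 0))
  refine (ENNReal.add_right_inj (a := ENNReal.ofReal (ρ / (ρ + c)) * P H)
    (ENNReal.mul_ne_top ENNReal.ofReal_ne_top (measure_ne_top P H))).1 ?_
  rw [← add_mul, ofReal_div_add_nonzeroDrawProb hρ, one_mul, ← hzero]
  exact hsplit

theorem IsUrn.measure_cyl_inter_noZeroDraw (h : IsUrn ρ ν P ζ B) (hρ : 0 < ρ) (a : ℕ → ℕ) :
    ∀ (M : ℕ) {S : Finset ℕ}, S ⊆ Icc 1 M →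
      P (cyl ζ (Icc 1 M) a ∩ noZeroDraw B S) =
        (∏ i ∈ Icc 1 M, ν (a i)) * ∏ i ∈ S, nonzeroDrawProb ρ (∑ j ∈ Icc 1 i, a j)
  | 0, S, hS => by
    have := h.prob
    obtain rfl : S = ∅ := subset_empty.1 (by simpa using hS)
    simp [cyl, noZeroDraw]
  | M + 1, S, hS => by
    set S' := S.erase (M + 1)
    have hS' : S' ⊆ Icc 1 M := fun i hi => by
      have := ne_of_mem_erase hi
      have := mem_Icc.1 (hS (mem_of_mem_erase hi))
      exact mem_Icc.2 (by omega)
    have hK : MeasurableSet[urnPast ζ B M] (cyl ζ (Icc 1 M) a ∩ noZeroDraw B S') :=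
      (measurableSet_cyl (fun i hi => measurable_ζ_urnPast hi) a).inter
        (measurableSet_noZeroDraw fun i hi => measurable_B_urnPast (hS' hi))
    have hH : P (cyl ζ (Icc 1 (M + 1)) a ∩ noZeroDraw B S') =
        ν (a (M + 1)) * P (cyl ζ (Icc 1 M) a ∩ noZeroDraw B S') := by
      rw [cyl_Icc_succ, Set.inter_assoc, h.measure_preimage_inter hK]
    rw [h.measure_cyl_inter_noZeroDraw hρ a M hS'] at hH
    rw [prod_Icc_succ_top (Nat.le_add_left 1 M)]
    by_cases hM : M + 1 ∈ S
    · have hHist :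
          MeasurableSet[urnHist ζ B (M + 1)] (cyl ζ (Icc 1 (M + 1)) a ∩ noZeroDraw B S') := by
        rw [cyl_Icc_succ, Set.inter_assoc]
        exact MeasurableSet.inter (le_sup_right (a := urnPast ζ B M) _ ⟨{a (M + 1)}, trivial, rfl⟩)
          (le_sup_left (b := MeasurableSpace.comap (ζ (M + 1)) ⊤) _ hK)
      rw [← insert_erase hM, noZeroDraw_insert, ← Set.inter_assoc, Set.inter_right_comm,
        h.measure_inter_draw_ne_zero hρ (Nat.le_add_left 1 M) hHist
          fun ω hω => urnColors_eq_of_mem_cyl hω.1,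
        hH, prod_insert (notMem_erase _ _)]
      ring
    · have hS'S : S' = S := erase_eq_of_notMem hM
      rw [← hS'S, hH]
      ring

theorem IsUrn.pow_mul_measure_cyl_inter_noZeroDraw_le (h : IsUrn ρ ν P ζ B) (hρ : 0 < ρ)
    {a : ℕ → ℕ} (ha : 1 ≤ a 1) (N M : ℕ) :
    nonzeroDrawProb ρ 1 ^ N * P (cyl ζ (Icc 1 M) a ∩ noZeroDraw B (Icc (N + 1) M)) ≤
      P (cyl ζ (Icc 1 M) a ∩ noZeroDraw B (Icc 1 M)) := by
  have hsub : Icc (N + 1) M ⊆ Icc 1 M := Icc_subset_Icc_left (Nat.le_add_left 1 N)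
  rw [h.measure_cyl_inter_noZeroDraw hρ a M hsub, h.measure_cyl_inter_noZeroDraw hρ a M le_rfl]
  set q := fun i => nonzeroDrawProb ρ (∑ j ∈ Icc 1 i, a j)
  set D := Icc 1 M \ Icc (N + 1) M
  have hcard : #D ≤ N :=
    calc #D ≤ #(Icc 1 N) := card_le_card fun i hi => by
          simp only [D, Finset.mem_sdiff, mem_Icc] at hi ⊢
          omega
      _ = N := by simp
  have hq : nonzeroDrawProb ρ 1 ^ N ≤ ∏ i ∈ D, q i :=
    calc nonzeroDrawProb ρ 1 ^ N ≤ nonzeroDrawProb ρ 1 ^ #D :=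
          pow_le_pow_of_le_one zero_le
            (le_add_self.trans_eq (ofReal_div_add_nonzeroDrawProb hρ 1)) hcard
      _ = ∏ _i ∈ D, nonzeroDrawProb ρ 1 := (prod_const _).symm
      _ ≤ ∏ i ∈ D, q i := prod_le_prod' fun i hi => nonzeroDrawProb_mono hρ <| ha.trans <|
          single_le_sum (fun _ _ => Nat.zero_le _)
            (left_mem_Icc.2 (mem_Icc.1 (Finset.mem_sdiff.1 hi).1).1)
  rw [← prod_sdiff hsub (f := q)]
  calc _ = (∏ i ∈ Icc 1 M, ν (a i)) * (nonzeroDrawProb ρ 1 ^ N * ∏ i ∈ Icc (N + 1) M, q i) := by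
        ring
    _ ≤ _ := by gcongr

theorem IsUrn.mul_measure_cyl_update_le (h : IsUrn ρ ν P ζ B) (hρ : 0 < ρ) (a : ℕ → ℕ)
    {j M : ℕ} (hj : j ∈ Icc 1 M) {k k' : ℕ} (hk : k ≤ k') {S : Finset ℕ} (hS : S ⊆ Icc 1 M) :
    ν k' * P (cyl ζ (Icc 1 M) (Function.update a j k) ∩ noZeroDraw B S) ≤
      ν k * P (cyl ζ (Icc 1 M) (Function.update a j k') ∩ noZeroDraw B S) := by
  have hν : ∀ l, ∏ i ∈ Icc 1 M, ν (Function.update a j l i) =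
      ν l * ∏ i ∈ Icc 1 M \ {j}, ν (a i) := by
    intro l
    rw [← prod_update_of_mem hj]
    exact prod_congr rfl fun i _ => Function.apply_update (fun _ => ν) a j l i
  have hupd : Function.update a j k ≤ Function.update a j k' := Function.update_mono hk
  rw [h.measure_cyl_inter_noZeroDraw hρ _ M hS, h.measure_cyl_inter_noZeroDraw hρ _ M hS, hν, hν]
  calc _ = ν k * ((ν k' * ∏ i ∈ Icc 1 M \ {j}, ν (a i)) *
        ∏ i ∈ S, nonzeroDrawProb ρ (∑ l ∈ Icc 1 i, Function.update a j k l)) := by ring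
    _ ≤ _ := by
      gcongr with i
      exact nonzeroDrawProb_mono hρ (sum_le_sum fun i _ => hupd i)

theorem IsUrn.pow_mul_measure_inter_noZeroDraw_le (h : IsUrn ρ ν P ζ B) (hρ : 0 < ρ) (N : ℕ)
    {M : ℕ} (hM : 1 ≤ M) :
    nonzeroDrawProb ρ 1 ^ N * P ({ω | 1 ≤ ζ 1 ω} ∩ noZeroDraw B (Icc (N + 1) M)) ≤
      P (noZeroDraw B (Icc 1 M)) := by
  rw [measure_eq_tsum_cyl_inter h.measζ (Icc 1 M), measure_eq_tsum_cyl_inter h.measζ (Icc 1 M),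
    ← ENNReal.tsum_mul_left]
  refine ENNReal.tsum_le_tsum fun v => ?_
  set a := Function.extend Subtype.val v 0
  by_cases ha : 1 ≤ a 1
  · calc _ ≤ nonzeroDrawProb ρ 1 ^ N * P (cyl ζ (Icc 1 M) a ∩ noZeroDraw B (Icc (N + 1) M)) := by
          gcongr
          exact Set.inter_subset_right
      _ ≤ _ := h.pow_mul_measure_cyl_inter_noZeroDraw_le hρ ha N M
  · have hempty : cyl ζ (Icc 1 M) a ∩ ({ω | 1 ≤ ζ 1 ω} ∩ noZeroDraw B (Icc (N + 1) M)) = ∅ :=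
      Set.eq_empty_iff_forall_notMem.2 fun ω hω =>
        ha (hω.1 1 (left_mem_Icc.2 hM) ▸ hω.2.1)
    rw [hempty, measure_empty, mul_zero]
    exact zero_le

theorem IsUrn.mul_measure_preimage_inter_le (h : IsUrn ρ ν P ζ B) (hρ : 0 < ρ) {k k' : ℕ}
    (hk : k ≤ k') {M : ℕ} (hM : 1 ≤ M) {S : Finset ℕ} (hS : S ⊆ Icc 1 M) :
    ν k' * P (ζ 1 ⁻¹' {k} ∩ noZeroDraw B S) ≤ ν k * P (ζ 1 ⁻¹' {k'} ∩ noZeroDraw B S) := by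
  rw [measure_eq_tsum_cyl_inter h.measζ (Icc 2 M), measure_eq_tsum_cyl_inter h.measζ (Icc 2 M),
    ← ENNReal.tsum_mul_left, ← ENNReal.tsum_mul_left]
  refine ENNReal.tsum_le_tsum fun v => ?_
  set a := Function.extend Subtype.val v 0
  have hcyl : ∀ l, cyl ζ (Icc 2 M) a ∩ (ζ 1 ⁻¹' {l} ∩ noZeroDraw B S) =
      cyl ζ (Icc 1 M) (Function.update a 1 l) ∩ noZeroDraw B S := by
    intro l
    have hIcc : insert 1 (Icc 2 M) = Icc 1 M := insert_Icc_add_one_left_eq_Icc hM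
    rw [← hIcc, cyl_insert_update ζ (by simp), Set.inter_left_comm,
      Set.inter_assoc]
  rw [hcyl, hcyl]
  exact h.mul_measure_cyl_update_le hρ a (left_mem_Icc.2 hM) hk hS

theorem IsUrn.mul_measure_noZeroDraw_le_two_mul (h : IsUrn ρ ν P ζ B) (hρ : 0 < ρ) {b : ℕ}
    (hb : 1 ≤ b) {M : ℕ} (hM : 1 ≤ M) {S : Finset ℕ} (hS : S ⊆ Icc 1 M) :
    ν b * P (noZeroDraw B S) ≤ 2 * P ({ω | 1 ≤ ζ 1 ω} ∩ noZeroDraw B S) := by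
  set X := noZeroDraw B S
  set G := {ω | 1 ≤ ζ 1 ω}
  have hX : X ⊆ (ζ 1 ⁻¹' {0} ∩ X) ∪ (G ∩ X) := fun ω hω =>
    (Nat.eq_zero_or_pos (ζ 1 ω)).imp (fun h0 => ⟨h0, hω⟩) fun hpos => ⟨hpos, hω⟩
  have hzero : ν b * P (ζ 1 ⁻¹' {0} ∩ X) ≤ P (G ∩ X) :=
    calc _ ≤ ν 0 * P (ζ 1 ⁻¹' {b} ∩ X) := h.mul_measure_preimage_inter_le hρ b.zero_le hM hS
      _ ≤ P (ζ 1 ⁻¹' {b} ∩ X) := mul_le_of_le_one_left zero_le (ν.coe_le_one 0)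
      _ ≤ P (G ∩ X) := measure_mono (Set.inter_subset_inter_left _ fun ω hω => hb.trans_eq hω.symm)
  calc ν b * P X ≤ ν b * P (ζ 1 ⁻¹' {0} ∩ X) + ν b * P (G ∩ X) := by
        rw [← mul_add]
        gcongr
        exact (measure_mono hX).trans (measure_union_le _ _)
    _ ≤ P (G ∩ X) + P (G ∩ X) := add_le_add hzero (mul_le_of_le_one_left zero_le (ν.coe_le_one b))
    _ = 2 * P (G ∩ X) := (two_mul _).symm

theorem IsUrn.mul_measure_noZeroDrawFrom_le (h : IsUrn ρ ν P ζ B) (hρ : 0 < ρ) {b : ℕ}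
    (hb : 1 ≤ b) (N : ℕ) :
    nonzeroDrawProb ρ 1 ^ N * ν b * P (noZeroDrawFrom B (N + 1)) ≤ 2 * P (noZeroDrawFrom B 1) := by
  have := h.prob
  rw [measure_noZeroDrawFrom_eq_iInf h.measB 1,
    ENNReal.mul_iInf_of_ne two_ne_zero ENNReal.ofNat_ne_top]
  refine le_iInf fun M => ?_
  have hsub : Icc (N + 1) (M + 1) ⊆ Icc 1 (M + 1) := Icc_subset_Icc_left (Nat.le_add_left 1 N)
  calc _ ≤ nonzeroDrawProb ρ 1 ^ N * (ν b * P (noZeroDraw B (Icc (N + 1) (M + 1)))) := by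
        rw [mul_assoc]
        gcongr
        rw [noZeroDrawFrom_eq_iInter]
        exact Set.iInter_subset (fun M => noZeroDraw B (Icc (N + 1) M)) (M + 1)
    _ ≤ nonzeroDrawProb ρ 1 ^ N *
          (2 * P ({ω | 1 ≤ ζ 1 ω} ∩ noZeroDraw B (Icc (N + 1) (M + 1)))) := by
        gcongr nonzeroDrawProb ρ 1 ^ N * ?_
        exact h.mul_measure_noZeroDraw_le_two_mul hρ hb (Nat.le_add_left 1 M) hsub
    _ = 2 * (nonzeroDrawProb ρ 1 ^ N *
          P ({ω | 1 ≤ ζ 1 ω} ∩ noZeroDraw B (Icc (N + 1) (M + 1)))) := by ring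
    _ ≤ 2 * P (noZeroDraw B (Icc 1 (M + 1))) := by
        gcongr
        exact h.pow_mul_measure_inter_noZeroDraw_le hρ N (Nat.le_add_left 1 M)
    _ ≤ 2 * P (noZeroDraw B (Icc 1 M)) := by
        gcongr
        exact noZeroDraw_anti B (Icc_subset_Icc_right M.le_succ)

end Urn

/-- **Lemma (dichotomy for drawing color `0` in the TBRW urn).** If with positive
probability color `0` is drawn only a finite number of times, then with positive
probability color `0` is never drawn. -/
theorem urn_zero_color_dichotomy
    (ρ : ℝ) (hρ : 0 < ρ) (ν : PMF ℕ) (hν0 : ν 0 < 1)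
    {Ω : Type*} [MeasurableSpace Ω] (P : Measure Ω)
    (ζ B : ℕ → Ω → ℕ) (h : IsUrn ρ ν P ζ B)
    (hpos : 0 < P {ω | {n : ℕ | 1 ≤ n ∧ B n ω = 0}.Finite}) :
    0 < P {ω | ∀ n : ℕ, 1 ≤ n → B n ω ≠ 0} := by
  obtain ⟨N, hN⟩ := exists_measure_noZeroDrawFrom_pos hpos
  obtain ⟨b, hb, hνb⟩ := PMF.exists_pos_apply_ne_zero hν0
  have hc : nonzeroDrawProb ρ 1 ^ N * ν b ≠ 0 :=
    mul_ne_zero (pow_ne_zero _ (nonzeroDrawProb_one_ne_zero hρ)) hνb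
  have h2 : 0 < 2 * P (noZeroDrawFrom B 1) :=
    (ENNReal.mul_pos hc hN.ne').trans_le (h.mul_measure_noZeroDrawFrom_le hρ hb N)
  exact (ENNReal.mul_pos_iff.1 h2).2

end TBRWPaper
end

section
/- Assume ν̄ < ∞ and ρ > ν̄. Then, for the (ρ,ν)-TBRW urn, E[N_k − N_{k−1}] = ν̄·(ρ/(ρ−ν̄))^k for every k ≥ 1. In particular E[N_k] < ∞ for all k. -/
/-!
Write `Z_n` for the number of draws of color `0` among the first `n` steps and `C_n` for the
number of non-zero colors after the additions of step `n`. On `{C_n = c}` the urn weighs `ρ + c`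
and color `0` is drawn with probability `ρ / (ρ + c)`, so `a_n(z) = E[ρ + C_n ; Z_n = z]` obeys
`a_{n+1}(z) + ρ P(Z_n = z) = a_n(z) + ν̄ P(Z_n = z) + ρ P(Z_n + 1 = z)`.
Summing over `n` and using `ν̄ < ρ` shows, by induction on `z`, that the expected time
`S(z) = ∑_n P(Z_n = z)` spent at level `z` is finite. Hence every level is left almost surely,
Wald's identity gives `E[N_k] = ν̄ ∑_{z<k} S(z) < ∞`, and domination by `N_{z+1}` forces
`a_n(z) → 0`. Letting `n → ∞` in the summed identity yields `(ρ - ν̄) S(0) = ρ` and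
`(ρ - ν̄) S(z+1) = ρ S(z)`, so `S(z) = (ρ / (ρ - ν̄))^(z+1)` and `E[N_k - N_{k-1}] = ν̄ S(k-1)`.
-/

open MeasureTheory ProbabilityTheory Filter
open scoped ENNReal NNReal Topology

namespace TBRWPaper

variable {Ω : Type*} [MeasurableSpace Ω]

/-- Number of draws of color `0` up to step `n`. -/
def zeroCount (B : ℕ → Ω → ℕ) (n : ℕ) (ω : Ω) : ℕ :=
  ((Finset.Icc 1 n).filter (fun i => B i ω = 0)).card

/-- `Θ_k`: the step at which color `0` is drawn from the urn for the `k`-th time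
(`Θ_0 = 0`; junk value `0` if color `0` is drawn fewer than `k` times). -/
noncomputable def Theta (B : ℕ → Ω → ℕ) (k : ℕ) (ω : Ω) : ℕ :=
  if k = 0 then 0 else sInf {n : ℕ | 1 ≤ n ∧ zeroCount B n ω = k}

/-- `N_k`: number of non-zero colors present in the urn at step `Θ_k`. -/
noncomputable def Ncol (ζ B : ℕ → Ω → ℕ) (k : ℕ) (ω : Ω) : ℕ :=
  urnColors ζ (Theta B k ω) ω

/-- `Y_k^j`: number of times color `j` has been drawn from the urn up to step `Θ_k`. -/
noncomputable def Ydraw (ζ B : ℕ → Ω → ℕ) (k j : ℕ) (ω : Ω) : ℕ :=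
  ((Finset.Icc 1 (Theta B k ω)).filter (fun i => B i ω = j)).card

lemma setLIntegral_comp_eq_tsum {α : Type*} [MeasurableSpace α] {μ : Measure α} {f : α → ℕ}
    (hf : Measurable f) (g : ℕ → ℝ≥0∞) (s : Set α) :
    ∫⁻ a in s, g (f a) ∂μ = ∑' c, g c * μ (s ∩ {a | f a = c}) := by
  rw [← lintegral_map measurable_from_top hf, lintegral_countable']
  congr 1
  funext c
  rw [Measure.map_apply hf (measurableSet_singleton c),
    Measure.restrict_apply (hf (measurableSet_singleton c)), Set.inter_comm]
  rfl

lemma measure_eq_tsum_inter {α : Type*} [MeasurableSpace α] {μ : Measure α} {f : α → ℕ}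
    (hf : Measurable f) (s : Set α) : μ s = ∑' c, μ (s ∩ {a | f a = c}) := by
  simpa using setLIntegral_comp_eq_tsum (μ := μ) hf (fun _ => 1) s

lemma ofReal_add_natCast_mul_ofReal_div {ρ : ℝ} (hρ : 0 < ρ) (x : ℝ) (c : ℕ) :
    (ENNReal.ofReal ρ + c) * ENNReal.ofReal (x / (ρ + c)) = ENNReal.ofReal x := by
  rw [← ENNReal.ofReal_natCast, ← ENNReal.ofReal_add hρ.le c.cast_nonneg,
    ← ENNReal.ofReal_mul (by positivity), mul_div_cancel₀ _ (by positivity)]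

lemma le_div_sub_of_mul_le_add {R b x K : ℝ≥0∞} (hx : x ≠ ⊤) (hb : b < R) (hR : R ≠ ⊤)
    (h : R * x ≤ K + b * x) : x ≤ K / (R - b) := by
  rw [ENNReal.le_div_iff_mul_le (Or.inl (tsub_pos_of_lt hb).ne') (Or.inl (ENNReal.sub_ne_top hR)),
    mul_comm, ENNReal.sub_mul fun _ _ => hx]
  exact tsub_le_iff_right.2 h

lemma eq_div_sub_of_mul_eq_add {R b x K : ℝ≥0∞} (hx : x ≠ ⊤) (hb : b < R) (hR : R ≠ ⊤)
    (h : R * x = K + b * x) : x = K / (R - b) := by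
  rw [ENNReal.eq_div_iff (tsub_pos_of_lt hb).ne' (ENNReal.sub_ne_top hR),
    ENNReal.sub_mul fun _ _ => hx, h,
    ENNReal.add_sub_cancel_right (ENNReal.mul_ne_top hb.ne_top hx)]

lemma add_sum_range_eq_of_succ {a f g : ℕ → ℝ≥0∞} (ha : ∀ n, a n ≠ ⊤)
    (hstep : ∀ n, a (n + 1) + f n = a n + g n) (n : ℕ) :
    a n + ∑ m ∈ Finset.range n, f m = a 0 + ∑ m ∈ Finset.range n, g m := by
  induction n with
  | zero => simp
  | succ n ih =>
    refine (ENNReal.add_right_inj (ha n)).1 ?_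
    calc a n + (a (n + 1) + ∑ m ∈ Finset.range (n + 1), f m)
        = (a (n + 1) + f n) + (a n + ∑ m ∈ Finset.range n, f m) := by
          rw [Finset.sum_range_succ]; ring
      _ = (a n + g n) + (a 0 + ∑ m ∈ Finset.range n, g m) := by rw [hstep, ih]
      _ = a n + (a 0 + ∑ m ∈ Finset.range (n + 1), g m) := by
          rw [Finset.sum_range_succ]; ring

lemma tsum_eq_add_tsum_of_succ {a f g : ℕ → ℝ≥0∞} (ha : ∀ n, a n ≠ ⊤)
    (hstep : ∀ n, a (n + 1) + f n = a n + g n) (hlim : Tendsto a atTop (𝓝 0)) :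
    ∑' n, f n = a 0 + ∑' n, g n := by
  have hf := hlim.add (ENNReal.tendsto_nat_tsum f)
  rw [zero_add] at hf
  refine tendsto_nhds_unique hf ?_
  simp_rw [add_sum_range_eq_of_succ ha hstep]
  exact tendsto_const_nhds.add (ENNReal.tendsto_nat_tsum g)

section Deterministic

variable {Ω : Type*} {ζ B : ℕ → Ω → ℕ} {ω : Ω}

@[simp] lemma urnColors_zero : urnColors ζ 0 ω = 0 := by simp [urnColors]

lemma urnColors_succ (n : ℕ) : urnColors ζ (n + 1) ω = urnColors ζ n ω + ζ (n + 1) ω := by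
  rw [urnColors, urnColors, Finset.sum_Icc_succ_top (by omega)]

lemma urnColors_eq_sum_range (n : ℕ) :
    urnColors ζ n ω = ∑ i ∈ Finset.range n, ζ (i + 1) ω := by
  induction n with
  | zero => simp
  | succ n ih => rw [urnColors_succ, ih, Finset.sum_range_succ]

lemma urnColors_mono : Monotone (urnColors ζ · ω) :=
  monotone_nat_of_le_succ fun n => by simp [urnColors_succ]

@[simp] lemma zeroCount_zero : zeroCount B 0 ω = 0 := by simp [zeroCount]

lemma zeroCount_succ (n : ℕ) :
    zeroCount B (n + 1) ω = zeroCount B n ω + if B (n + 1) ω = 0 then 1 else 0 := by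
  rw [zeroCount, zeroCount, Finset.card_filter, Finset.card_filter,
    Finset.sum_Icc_succ_top (by omega)]

lemma zeroCount_mono : Monotone (zeroCount B · ω) :=
  monotone_nat_of_le_succ fun n => by simp [zeroCount_succ]

lemma exists_zeroCount_eq_of_le {n j : ℕ} (hj : j ≤ zeroCount B n ω) :
    ∃ m ≤ n, zeroCount B m ω = j := by
  induction n with
  | zero => exact ⟨0, le_rfl, by simp_all⟩
  | succ n ih =>
    rcases le_or_gt j (zeroCount B n ω) with hle | hlt
    · obtain ⟨m, hm, hmj⟩ := ih hle
      exact ⟨m, by omega, hmj⟩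
    · refine ⟨n + 1, le_rfl, ?_⟩
      rw [zeroCount_succ] at hj ⊢
      split_ifs at hj ⊢ <;> omega

lemma lt_Theta_iff {k : ℕ} (hreach : ∃ n, k ≤ zeroCount B n ω) (i : ℕ) :
    i < Theta B k ω ↔ zeroCount B i ω < k := by
  rcases Nat.eq_zero_or_pos k with rfl | hk
  · simp [Theta]
  have pos_of_eq {m : ℕ} (hm : zeroCount B m ω = k) : 1 ≤ m :=
    Nat.pos_of_ne_zero (by rintro rfl; simp at hm; omega)
  have hne : {n | 1 ≤ n ∧ zeroCount B n ω = k}.Nonempty := by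
    obtain ⟨n, hn⟩ := hreach
    obtain ⟨m, -, hm⟩ := exists_zeroCount_eq_of_le hn
    exact ⟨m, pos_of_eq hm, hm⟩
  have hTheta := Nat.sInf_mem hne
  rw [Theta, if_neg hk.ne']
  constructor
  · intro hi
    by_contra! hle
    obtain ⟨m, hmi, hm⟩ := exists_zeroCount_eq_of_le hle
    have := Nat.sInf_le (s := {n | 1 ≤ n ∧ zeroCount B n ω = k}) ⟨pos_of_eq hm, hm⟩
    omega
  · intro hi
    by_contra! hle
    have := zeroCount_mono (B := B) (ω := ω) hle
    simp only [hTheta.2] at this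
    omega

lemma urnColors_le_Ncol {k n : ℕ} (hreach : ∃ n, k ≤ zeroCount B n ω)
    (hn : zeroCount B n ω < k) : urnColors ζ n ω ≤ Ncol ζ B k ω :=
  urnColors_mono ((lt_Theta_iff hreach n).2 hn).le

noncomputable def addedAtLevels (ζ B : ℕ → Ω → ℕ) (s : Set ℕ) (ω : Ω) : ℝ≥0∞ :=
  ∑' i, (zeroCount B i ⁻¹' s).indicator (fun ω => (ζ (i + 1) ω : ℝ≥0∞)) ω

lemma Ncol_eq_addedAtLevels {k : ℕ} (hreach : ∃ n, k ≤ zeroCount B n ω) :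
    (Ncol ζ B k ω : ℝ≥0∞) = addedAtLevels ζ B (Set.Iio k) ω := by
  have hmem (i : ℕ) : ω ∈ zeroCount B i ⁻¹' Set.Iio k ↔ i ∈ Finset.range (Theta B k ω) := by
    rw [Finset.mem_range, lt_Theta_iff hreach]
    rfl
  rw [addedAtLevels, tsum_eq_sum (s := Finset.range (Theta B k ω))
      fun i hi => Set.indicator_of_notMem (mt (hmem i).1 hi) _,
    Finset.sum_congr rfl fun i hi => Set.indicator_of_mem ((hmem i).2 hi) _,
    Ncol, urnColors_eq_sum_range]
  push_cast
  rfl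

lemma addedAtLevels_union {s t : Set ℕ} (hst : Disjoint s t) :
    addedAtLevels ζ B (s ∪ t) ω = addedAtLevels ζ B s ω + addedAtLevels ζ B t ω := by
  simp only [addedAtLevels, Set.preimage_union,
    Set.indicator_union_of_disjoint (hst.preimage _), ENNReal.tsum_add]

lemma Ncol_succ_sub_Ncol {k : ℕ} (hreach : ∃ n, k + 1 ≤ zeroCount B n ω) :
    (Ncol ζ B (k + 1) ω : ℝ≥0∞) - Ncol ζ B k ω = addedAtLevels ζ B {k} ω := by
  obtain ⟨n, hn⟩ := hreach
  rw [Ncol_eq_addedAtLevels ⟨n, hn⟩, Set.Iio_add_one_eq_Iic, ← Set.Iio_insert, Set.insert_eq,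
    Set.union_comm, addedAtLevels_union (s := Set.Iio k) (by simp),
    ← Ncol_eq_addedAtLevels ⟨n, by omega⟩, ENNReal.add_sub_cancel_left (ENNReal.natCast_ne_top _)]

lemma comap_zeta_le_urnPast {i n : ℕ} (hi : i ∈ Finset.Icc 1 n) :
    MeasurableSpace.comap (ζ i) ⊤ ≤ urnPast ζ B n :=
  le_sup_of_le_left
    (le_iSup₂ (f := fun i (_ : i ∈ Finset.Icc 1 n) => MeasurableSpace.comap (ζ i) ⊤) i hi)

lemma comap_B_le_urnPast {i n : ℕ} (hi : i ∈ Finset.Icc 1 n) :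
    MeasurableSpace.comap (B i) ⊤ ≤ urnPast ζ B n :=
  le_sup_of_le_right
    (le_iSup₂ (f := fun i (_ : i ∈ Finset.Icc 1 n) => MeasurableSpace.comap (B i) ⊤) i hi)

lemma measurable_urnColors_urnPast (n : ℕ) : Measurable[urnPast ζ B n] (urnColors ζ n) :=
  Finset.measurable_sum _ fun i hi =>
    (comap_measurable (ζ i)).mono (comap_zeta_le_urnPast hi) le_rfl

lemma measurable_zeroCount_urnPast (n : ℕ) : Measurable[urnPast ζ B n] (zeroCount B n) := by
  have : zeroCount B n = fun ω => ∑ i ∈ Finset.Icc 1 n, if B i ω = 0 then 1 else 0 := by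
    funext ω; rw [zeroCount, Finset.card_filter]
  rw [this]
  exact Finset.measurable_sum _ fun i hi =>
    ((measurable_from_top (f := fun k : ℕ => if k = 0 then 1 else 0)).comp
      (comap_measurable (B i))).mono (comap_B_le_urnPast hi) le_rfl

end Deterministic

section Urn

variable {ρ : ℝ} {ν : PMF ℕ} {P : Measure Ω} {ζ B : ℕ → Ω → ℕ}

lemma urnPast_le (hζ : ∀ i, Measurable (ζ i)) (hB : ∀ i, Measurable (B i)) (n : ℕ) :
    urnPast ζ B n ≤ ‹MeasurableSpace Ω› :=
  sup_le (iSup₂_le fun i _ => (hζ i).comap_le) (iSup₂_le fun i _ => (hB i).comap_le)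

lemma urnHist_le (hζ : ∀ i, Measurable (ζ i)) (hB : ∀ i, Measurable (B i)) (n : ℕ) :
    urnHist ζ B n ≤ ‹MeasurableSpace Ω› :=
  sup_le (urnPast_le hζ hB _) (hζ n).comap_le

lemma IsUrn.measurable_urnColors (h : IsUrn ρ ν P ζ B) (n : ℕ) : Measurable (urnColors ζ n) :=
  (measurable_urnColors_urnPast n).mono (urnPast_le h.measζ h.measB n) le_rfl

lemma IsUrn.measurable_zeroCount (h : IsUrn ρ ν P ζ B) (n : ℕ) : Measurable (zeroCount B n) :=
  (measurable_zeroCount_urnPast n).mono (urnPast_le h.measζ h.measB n) le_rfl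

lemma IsUrn.lintegral_zeta (h : IsUrn ρ ν P ζ B) {n : ℕ} (hn : 1 ≤ n) :
    ∫⁻ ω, (ζ n ω : ℝ≥0∞) ∂P = nubar ν := by
  rw [← lintegral_map (f := fun k : ℕ => (k : ℝ≥0∞)) measurable_from_top (h.measζ n),
    h.ζ_law n hn, lintegral_countable', nubar]
  simp [PMF.toMeasure_apply_singleton]

lemma IsUrn.setLIntegral_zeta (h : IsUrn ρ ν P ζ B) {n : ℕ} (hn : 1 ≤ n) {A : Set Ω}
    (hA : MeasurableSet[urnPast ζ B (n - 1)] A) :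
    ∫⁻ ω in A, (ζ n ω : ℝ≥0∞) ∂P = nubar ν * P A := by
  have hAm := urnPast_le h.measζ h.measB (n - 1) A hA
  have hζm : Measurable[MeasurableSpace.comap (ζ n) ⊤] fun ω => (ζ n ω : ℝ≥0∞) :=
    measurable_from_top.comp (comap_measurable (ζ n))
  have hAi : Measurable[urnPast ζ B (n - 1)] (A.indicator (1 : Ω → ℝ≥0∞)) :=
    measurable_const.indicator hA
  rw [← lintegral_indicator hAm, ← h.lintegral_zeta hn, ← lintegral_indicator_one hAm,
    ← lintegral_mul_eq_lintegral_mul_lintegral_of_independent_measurableSpace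
      (h.measζ n).comap_le (urnPast_le h.measζ h.measB (n - 1)) (h.ζ_indep n hn) hζm hAi]
  congr 1
  funext ω
  by_cases hω : ω ∈ A <;> simp [hω]

lemma IsUrn.setLIntegral_urnColors_succ (h : IsUrn ρ ν P ζ B) {m : ℕ} {A : Set Ω}
    (hA : MeasurableSet[urnPast ζ B m] A) :
    ∫⁻ ω in A, (urnColors ζ (m + 1) ω : ℝ≥0∞) ∂P
      = ∫⁻ ω in A, (urnColors ζ m ω : ℝ≥0∞) ∂P + nubar ν * P A := by
  simp only [urnColors_succ, Nat.cast_add]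
  have hC : Measurable fun ω => (urnColors ζ m ω : ℝ≥0∞) :=
    measurable_from_top.comp (h.measurable_urnColors m)
  rw [lintegral_add_left hC, h.setLIntegral_zeta (n := m + 1) (by omega) hA]

lemma IsUrn.lintegral_urnColors (h : IsUrn ρ ν P ζ B) (n : ℕ) :
    ∫⁻ ω, (urnColors ζ n ω : ℝ≥0∞) ∂P = n * nubar ν := by
  have := h.prob
  induction n with
  | zero => simp
  | succ n ih =>
    have := h.setLIntegral_urnColors_succ (m := n) MeasurableSet.univ
    rw [Measure.restrict_univ, ih, measure_univ, mul_one] at this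
    rw [this]
    push_cast
    ring

/-- On `{C_n = c}` the urn weighs `ρ + c` and color `0` is drawn with probability
`ρ / (ρ + c)`: the two factors cancel. -/
lemma IsUrn.setLIntegral_weight_draw_zero (h : IsUrn ρ ν P ζ B) (hρ : 0 < ρ) {n : ℕ}
    (hn : 1 ≤ n) {H : Set Ω} (hH : MeasurableSet[urnHist ζ B n] H) :
    ∫⁻ ω in H ∩ {ω | B n ω = 0}, (ENNReal.ofReal ρ + urnColors ζ n ω) ∂P
      = ENNReal.ofReal ρ * P H := by
  have hC := h.measurable_urnColors n
  calc _ = ∑' c : ℕ, (ENNReal.ofReal ρ + c)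
          * P (H ∩ {ω | B n ω = 0} ∩ {ω | urnColors ζ n ω = c}) :=
        setLIntegral_comp_eq_tsum hC (fun c => ENNReal.ofReal ρ + c) _
    _ = ∑' c : ℕ, ENNReal.ofReal ρ * P (H ∩ {ω | urnColors ζ n ω = c}) := by
        congr 1
        funext c
        rw [Set.inter_right_comm, h.draw_zero n hn c H hH, ← mul_assoc,
          ofReal_add_natCast_mul_ofReal_div hρ]
    _ = ENNReal.ofReal ρ * P H := by
        rw [ENNReal.tsum_mul_left, ← measure_eq_tsum_inter hC]

lemma IsUrn.measure_draw_pos (h : IsUrn ρ ν P ζ B) {n : ℕ} (hn : 1 ≤ n) (c : ℕ) {H : Set Ω}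
    (hH : MeasurableSet[urnHist ζ B n] H) :
    P ((H ∩ {ω | urnColors ζ n ω = c}) \ {ω | B n ω = 0})
      = c * ENNReal.ofReal (1 / (ρ + c)) * P (H ∩ {ω | urnColors ζ n ω = c}) := by
  have hHm := urnHist_le h.measζ h.measB n H hH
  have hunion : (H ∩ {ω | urnColors ζ n ω = c}) \ {ω | B n ω = 0}
      = ⋃ j ∈ Finset.Icc 1 c, H ∩ {ω | urnColors ζ n ω = c} ∩ {ω | B n ω = j} := by
    ext ω
    simp only [Set.mem_sdiff, Set.mem_inter_iff, Set.mem_iUnion, Finset.mem_Icc, exists_prop]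
    constructor
    · rintro ⟨⟨hω, hc⟩, hb⟩
      exact ⟨B n ω, ⟨Nat.one_le_iff_ne_zero.2 hb, hc ▸ h.B_le n ω hn⟩, ⟨hω, hc⟩, rfl⟩
    · rintro ⟨j, ⟨hj, -⟩, hωc, rfl⟩
      exact ⟨hωc, by simp only [Set.mem_ofPred_eq]; omega⟩
  rw [hunion, measure_biUnion_finset, Finset.sum_congr rfl fun j hj =>
      h.draw_pos n hn c j (Finset.mem_Icc.1 hj).1 (Finset.mem_Icc.1 hj).2 H hH,
    Finset.sum_const, Nat.card_Icc, nsmul_eq_mul, Nat.add_sub_cancel, mul_assoc]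
  · intro j _ j' _ hjj'
    exact Set.disjoint_left.2 fun ω hj hj' => hjj' (hj.2.symm.trans hj'.2)
  · exact fun j _ => (hHm.inter (h.measurable_urnColors n (measurableSet_singleton c))).inter
      (h.measB n (measurableSet_singleton j))

/-- On `{C_n = c}` the urn weighs `ρ + c` and each of the `c` non-zero colors is drawn with
probability `1 / (ρ + c)`. -/
lemma IsUrn.setLIntegral_weight_draw_pos (h : IsUrn ρ ν P ζ B) (hρ : 0 < ρ) {n : ℕ}
    (hn : 1 ≤ n) {H : Set Ω} (hH : MeasurableSet[urnHist ζ B n] H) :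
    ∫⁻ ω in H \ {ω | B n ω = 0}, (ENNReal.ofReal ρ + urnColors ζ n ω) ∂P
      = ∫⁻ ω in H, (urnColors ζ n ω : ℝ≥0∞) ∂P := by
  have hC := h.measurable_urnColors n
  rw [setLIntegral_comp_eq_tsum hC (fun c => ENNReal.ofReal ρ + c),
    setLIntegral_comp_eq_tsum hC (fun c => (c : ℝ≥0∞))]
  congr 1
  funext c
  rw [← Set.inter_sdiff_right_comm, h.measure_draw_pos hn c hH, ← mul_assoc, ← mul_assoc,
    mul_comm (ENNReal.ofReal ρ + c) (c : ℝ≥0∞), mul_assoc (c : ℝ≥0∞),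
    ofReal_add_natCast_mul_ofReal_div hρ, ENNReal.ofReal_one, mul_one]

/-- `a_n(z)`. -/
noncomputable def levelWeight (ρ : ℝ) (P : Measure Ω) (ζ B : ℕ → Ω → ℕ) (n z : ℕ) : ℝ≥0∞ :=
  ∫⁻ ω in {ω | zeroCount B n ω = z}, (ENNReal.ofReal ρ + urnColors ζ n ω) ∂P

/-- `S(z)`, which is also `E[Θ_{z+1} - Θ_z]`. -/
noncomputable def levelTime (P : Measure Ω) (B : ℕ → Ω → ℕ) (z : ℕ) : ℝ≥0∞ :=
  ∑' n, P {ω | zeroCount B n ω = z}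

lemma levelWeight_eq (n z : ℕ) :
    levelWeight ρ P ζ B n z = ENNReal.ofReal ρ * P {ω | zeroCount B n ω = z}
      + ∫⁻ ω in {ω | zeroCount B n ω = z}, (urnColors ζ n ω : ℝ≥0∞) ∂P := by
  rw [levelWeight, lintegral_add_left measurable_const, setLIntegral_const, mul_comm]

lemma IsUrn.levelWeight_ne_top (h : IsUrn ρ ν P ζ B) (hnb : nubar ν ≠ ⊤) (n z : ℕ) :
    levelWeight ρ P ζ B n z ≠ ⊤ := by
  have := h.prob
  refine ne_top_of_le_ne_top ?_ (setLIntegral_le_lintegral _ _)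
  rw [lintegral_add_left measurable_const, lintegral_const, h.lintegral_urnColors, measure_univ]
  finiteness

lemma IsUrn.levelWeight_zero_zero (h : IsUrn ρ ν P ζ B) :
    levelWeight ρ P ζ B 0 0 = ENNReal.ofReal ρ := by
  have := h.prob
  simp [levelWeight]

lemma levelWeight_zero_succ (z : ℕ) : levelWeight ρ P ζ B 0 (z + 1) = 0 := by
  simp [levelWeight]

/-- Split `{Z_{m+1} = z}` according to whether color `0` is drawn at step `m + 1`. -/
lemma IsUrn.levelWeight_succ_add (h : IsUrn ρ ν P ζ B) (hρ : 0 < ρ) (m z : ℕ) :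
    levelWeight ρ P ζ B (m + 1) z + ENNReal.ofReal ρ * P {ω | zeroCount B m ω = z}
      = levelWeight ρ P ζ B m z + (nubar ν * P {ω | zeroCount B m ω = z}
        + ENNReal.ofReal ρ * P {ω | zeroCount B m ω + 1 = z}) := by
  have hpast (s : Set ℕ) : MeasurableSet[urnPast ζ B m] (zeroCount B m ⁻¹' s) :=
    measurable_zeroCount_urnPast m trivial
  have hhist (s : Set ℕ) : MeasurableSet[urnHist ζ B (m + 1)] (zeroCount B m ⁻¹' s) :=
    le_sup_left (a := urnPast ζ B m) _ (hpast s)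
  have hB0 : MeasurableSet {ω | B (m + 1) ω = 0} := h.measB (m + 1) (measurableSet_singleton 0)
  have hzero : {ω | zeroCount B (m + 1) ω = z} ∩ {ω | B (m + 1) ω = 0}
      = {ω | zeroCount B m ω + 1 = z} ∩ {ω | B (m + 1) ω = 0} := by
    ext ω
    by_cases hb : B (m + 1) ω = 0 <;> simp [hb, zeroCount_succ]
  have hpos : {ω | zeroCount B (m + 1) ω = z} \ {ω | B (m + 1) ω = 0}
      = {ω | zeroCount B m ω = z} \ {ω | B (m + 1) ω = 0} := by
    ext ω
    by_cases hb : B (m + 1) ω = 0 <;> simp [hb, zeroCount_succ]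
  rw [levelWeight, ← lintegral_inter_add_sdiff _ _ hB0, hzero, hpos,
    h.setLIntegral_weight_draw_zero hρ (by omega) (H := {ω | zeroCount B m ω + 1 = z})
      (hhist {k | k + 1 = z}),
    h.setLIntegral_weight_draw_pos hρ (by omega) (H := {ω | zeroCount B m ω = z}) (hhist {z}),
    h.setLIntegral_urnColors_succ (A := {ω | zeroCount B m ω = z}) (hpast {z}), levelWeight_eq]
  ring

lemma tsum_measure_zeroCount_add_one_eq_levelTime (z : ℕ) :
    ∑' m, P {ω | zeroCount B m ω + 1 = z + 1} = levelTime P B z := by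
  simp only [Nat.add_right_cancel_iff]
  rfl

/-- Since `ν̄ < ρ`, the telescoped step identity bounds the partial sums of `levelTime z` by
those of the level below. -/
lemma IsUrn.levelTime_ne_top_of (h : IsUrn ρ ν P ζ B) (hρ : 0 < ρ) (hnb : nubar ν ≠ ⊤)
    (hlt : nubar ν < ENNReal.ofReal ρ) {z : ℕ}
    (hbelow : ∑' m, P {ω | zeroCount B m ω + 1 = z} ≠ ⊤) : levelTime P B z ≠ ⊤ := by
  have := h.prob
  set p : ℕ → ℝ≥0∞ := fun m => P {ω | zeroCount B m ω = z}
  set q : ℕ → ℝ≥0∞ := fun m => P {ω | zeroCount B m ω + 1 = z}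
  set K := levelWeight ρ P ζ B 0 z + ENNReal.ofReal ρ * ∑' m, q m
  have hbound (n : ℕ) : ∑ m ∈ Finset.range n, p m ≤ K / (ENNReal.ofReal ρ - nubar ν) := by
    refine le_div_sub_of_mul_le_add (ENNReal.sum_ne_top.2 fun _ _ => measure_ne_top P _) hlt
      ENNReal.ofReal_ne_top ?_
    calc ENNReal.ofReal ρ * ∑ m ∈ Finset.range n, p m
        ≤ levelWeight ρ P ζ B n z + ∑ m ∈ Finset.range n, ENNReal.ofReal ρ * p m := by
          rw [Finset.mul_sum]; exact le_add_self
      _ = levelWeight ρ P ζ B 0 z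
            + ∑ m ∈ Finset.range n, (nubar ν * p m + ENNReal.ofReal ρ * q m) :=
          add_sum_range_eq_of_succ (h.levelWeight_ne_top hnb · z) (h.levelWeight_succ_add hρ · z) n
      _ = levelWeight ρ P ζ B 0 z + ENNReal.ofReal ρ * ∑ m ∈ Finset.range n, q m
            + nubar ν * ∑ m ∈ Finset.range n, p m := by
          rw [Finset.sum_add_distrib, ← Finset.mul_sum, ← Finset.mul_sum]; ring
      _ ≤ K + nubar ν * ∑ m ∈ Finset.range n, p m := by
          simp only [K]
          gcongr
          exact ENNReal.sum_le_tsum _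
  refine ne_top_of_le_ne_top ?_ (ENNReal.summable.tsum_le_of_sum_range_le hbound)
  exact ENNReal.div_ne_top (ENNReal.add_ne_top.2 ⟨h.levelWeight_ne_top hnb 0 z,
    ENNReal.mul_ne_top ENNReal.ofReal_ne_top hbelow⟩) (tsub_pos_of_lt hlt).ne'

lemma IsUrn.levelTime_ne_top (h : IsUrn ρ ν P ζ B) (hρ : 0 < ρ) (hnb : nubar ν ≠ ⊤)
    (hlt : nubar ν < ENNReal.ofReal ρ) (z : ℕ) : levelTime P B z ≠ ⊤ := by
  induction z with
  | zero => exact h.levelTime_ne_top_of hρ hnb hlt (by simp)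
  | succ z ih =>
    exact h.levelTime_ne_top_of hρ hnb hlt (by rwa [tsum_measure_zeroCount_add_one_eq_levelTime])

lemma IsUrn.tsum_measure_zeroCount_lt (h : IsUrn ρ ν P ζ B) (k : ℕ) :
    ∑' n, P {ω | zeroCount B n ω < k} = ∑ w ∈ Finset.range k, levelTime P B w := by
  have hsplit (n : ℕ) :
      P {ω | zeroCount B n ω < k} = ∑ w ∈ Finset.range k, P {ω | zeroCount B n ω = w} := by
    have := sum_measure_preimage_singleton (μ := P) (Finset.range k) (f := zeroCount B n)
      fun w _ => h.measurable_zeroCount n (measurableSet_singleton w)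
    rw [Finset.coe_range] at this
    exact this.symm
  simp_rw [hsplit]
  exact Summable.tsum_finsetSum fun _ _ => ENNReal.summable

lemma IsUrn.ae_exists_le_zeroCount (h : IsUrn ρ ν P ζ B) (hρ : 0 < ρ) (hnb : nubar ν ≠ ⊤)
    (hlt : nubar ν < ENNReal.ofReal ρ) : ∀ᵐ ω ∂P, ∀ k, ∃ n, k ≤ zeroCount B n ω := by
  refine ae_all_iff.2 fun k => ae_iff.2 (le_antisymm ?_ zero_le)
  have hsum : ∑' n, P {ω | zeroCount B n ω < k} ≠ ⊤ := by
    rw [h.tsum_measure_zeroCount_lt]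
    exact ENNReal.sum_ne_top.2 fun w _ => h.levelTime_ne_top hρ hnb hlt w
  refine ge_of_tendsto' (ENNReal.tendsto_atTop_zero_of_tsum_ne_top hsum) fun n => ?_
  exact measure_mono fun ω hω => not_le.1 fun hle => hω ⟨n, hle⟩

lemma IsUrn.lintegral_addedAtLevels (h : IsUrn ρ ν P ζ B) (s : Set ℕ) :
    ∫⁻ ω, addedAtLevels ζ B s ω ∂P = nubar ν * ∑' i, P (zeroCount B i ⁻¹' s) := by
  have hmeas (i : ℕ) : MeasurableSet (zeroCount B i ⁻¹' s) := h.measurable_zeroCount i trivial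
  have hζ (i : ℕ) : Measurable fun ω => (ζ (i + 1) ω : ℝ≥0∞) :=
    measurable_from_top.comp (h.measζ (i + 1))
  simp only [addedAtLevels]
  rw [lintegral_tsum fun i => ((hζ i).indicator (hmeas i)).aemeasurable,
    ← ENNReal.tsum_mul_left]
  congr 1
  funext i
  rw [lintegral_indicator (hmeas i),
    h.setLIntegral_zeta (n := i + 1) (by omega) (measurable_zeroCount_urnPast i trivial)]

lemma IsUrn.lintegral_Ncol (h : IsUrn ρ ν P ζ B) (hρ : 0 < ρ) (hnb : nubar ν ≠ ⊤)
    (hlt : nubar ν < ENNReal.ofReal ρ) (k : ℕ) :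
    ∫⁻ ω, (Ncol ζ B k ω : ℝ≥0∞) ∂P = nubar ν * ∑ w ∈ Finset.range k, levelTime P B w := by
  rw [lintegral_congr_ae ((h.ae_exists_le_zeroCount hρ hnb hlt).mono fun ω hω =>
      Ncol_eq_addedAtLevels (hω k)), h.lintegral_addedAtLevels, ← h.tsum_measure_zeroCount_lt]
  rfl

lemma IsUrn.lintegral_Ncol_ne_top (h : IsUrn ρ ν P ζ B) (hρ : 0 < ρ) (hnb : nubar ν ≠ ⊤)
    (hlt : nubar ν < ENNReal.ofReal ρ) (k : ℕ) : ∫⁻ ω, (Ncol ζ B k ω : ℝ≥0∞) ∂P ≠ ⊤ := by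
  rw [h.lintegral_Ncol hρ hnb hlt k]
  exact ENNReal.mul_ne_top hnb (ENNReal.sum_ne_top.2 fun w _ => h.levelTime_ne_top hρ hnb hlt w)

lemma IsUrn.lintegral_Ncol_succ_sub (h : IsUrn ρ ν P ζ B) (hρ : 0 < ρ) (hnb : nubar ν ≠ ⊤)
    (hlt : nubar ν < ENNReal.ofReal ρ) (k : ℕ) :
    ∫⁻ ω, ((Ncol ζ B (k + 1) ω : ℝ≥0∞) - Ncol ζ B k ω) ∂P = nubar ν * levelTime P B k := by
  rw [lintegral_congr_ae ((h.ae_exists_le_zeroCount hρ hnb hlt).mono fun ω hω =>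
      Ncol_succ_sub_Ncol (hω (k + 1))), h.lintegral_addedAtLevels]
  rfl

/-- Before the `(z+1)`-th draw of color `0` the urn holds at most `N_{z+1}` non-zero colors,
and `N_{z+1}` is integrable. -/
lemma IsUrn.tendsto_levelWeight (h : IsUrn ρ ν P ζ B) (hρ : 0 < ρ) (hnb : nubar ν ≠ ⊤)
    (hlt : nubar ν < ENNReal.ofReal ρ) (z : ℕ) :
    Tendsto (levelWeight ρ P ζ B · z) atTop (𝓝 0) := by
  have hp : Tendsto (fun n => P {ω | zeroCount B n ω = z}) atTop (𝓝 0) :=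
    ENNReal.tendsto_atTop_zero_of_tsum_ne_top (h.levelTime_ne_top hρ hnb hlt z)
  have hbound (n : ℕ) : levelWeight ρ P ζ B n z ≤ ENNReal.ofReal ρ * P {ω | zeroCount B n ω = z}
      + ∫⁻ ω in {ω | zeroCount B n ω = z}, (Ncol ζ B (z + 1) ω : ℝ≥0∞) ∂P := by
    rw [levelWeight_eq]
    gcongr 1
    refine lintegral_mono_ae ?_
    filter_upwards [ae_restrict_mem (h.measurable_zeroCount n (measurableSet_singleton z)),
      ae_restrict_of_ae (h.ae_exists_le_zeroCount hρ hnb hlt)] with ω hω hreach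
    exact Nat.cast_le.2 (urnColors_le_Ncol (hreach (z + 1)) (by rw [hω]; omega))
  have hlim :=
    (ENNReal.Tendsto.const_mul (a := ENNReal.ofReal ρ) hp (Or.inr ENNReal.ofReal_ne_top)).add
    (tendsto_setLIntegral_zero (s := fun n => {ω | zeroCount B n ω = z})
      (h.lintegral_Ncol_ne_top hρ hnb hlt (z + 1)) hp)
  rw [mul_zero, add_zero] at hlim
  exact tendsto_of_tendsto_of_tendsto_of_le_of_le tendsto_const_nhds hlim (fun _ => zero_le)
    hbound

lemma IsUrn.levelTime_recursion (h : IsUrn ρ ν P ζ B) (hρ : 0 < ρ) (hnb : nubar ν ≠ ⊤)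
    (hlt : nubar ν < ENNReal.ofReal ρ) (z : ℕ) :
    ENNReal.ofReal ρ * levelTime P B z = levelWeight ρ P ζ B 0 z
      + (nubar ν * levelTime P B z + ENNReal.ofReal ρ * ∑' m, P {ω | zeroCount B m ω + 1 = z}) := by
  have := tsum_eq_add_tsum_of_succ (h.levelWeight_ne_top hnb · z) (h.levelWeight_succ_add hρ · z)
    (h.tendsto_levelWeight hρ hnb hlt z)
  rwa [ENNReal.tsum_add, ENNReal.tsum_mul_left, ENNReal.tsum_mul_left, ENNReal.tsum_mul_left]
    at this

lemma IsUrn.levelTime_eq (h : IsUrn ρ ν P ζ B) (hρ : 0 < ρ) (hnb : nubar ν ≠ ⊤)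
    (hlt : nubar ν < ENNReal.ofReal ρ) (z : ℕ) :
    levelTime P B z = (ENNReal.ofReal ρ / (ENNReal.ofReal ρ - nubar ν)) ^ (z + 1) := by
  have hsolve (z : ℕ) {K : ℝ≥0∞}
      (hK : ENNReal.ofReal ρ * levelTime P B z = K + nubar ν * levelTime P B z) :
      levelTime P B z = K / (ENNReal.ofReal ρ - nubar ν) :=
    eq_div_sub_of_mul_eq_add (h.levelTime_ne_top hρ hnb hlt z) hlt ENNReal.ofReal_ne_top hK
  induction z with
  | zero =>
    rw [zero_add, pow_one]
    refine hsolve 0 ?_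
    simpa [h.levelWeight_zero_zero] using h.levelTime_recursion hρ hnb hlt 0
  | succ z ih =>
    rw [pow_succ', ← ih, ← ENNReal.mul_div_right_comm]
    refine hsolve (z + 1) ?_
    have := h.levelTime_recursion hρ hnb hlt (z + 1)
    rwa [levelWeight_zero_succ, zero_add, tsum_measure_zeroCount_add_one_eq_levelTime,
      add_comm (nubar ν * _)] at this

end Urn

theorem urn_expected_new_colors_general
    (ρ : ℝ) (hρ : 0 < ρ) (ν : PMF ℕ)
    (hnubar : nubar ν ≠ ⊤) (hρν : (nubar ν).toReal < ρ)
    {Ω : Type*} [MeasurableSpace Ω] (P : Measure Ω)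
    (ζ B : ℕ → Ω → ℕ) (h : IsUrn ρ ν P ζ B) :
    (∀ k : ℕ, 1 ≤ k →
      ∫⁻ ω, ((Ncol ζ B k ω : ℝ≥0∞) - (Ncol ζ B (k - 1) ω : ℝ≥0∞)) ∂P =
        ENNReal.ofReal
          ((nubar ν).toReal * (ρ / (ρ - (nubar ν).toReal)) ^ k)) ∧
    ∀ k : ℕ, ∫⁻ ω, (Ncol ζ B k ω : ℝ≥0∞) ∂P < ⊤ := by
  have hlt : nubar ν < ENNReal.ofReal ρ := (ENNReal.lt_ofReal_iff_toReal_lt hnubar).2 hρν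
  have hratio : ENNReal.ofReal ρ / (ENNReal.ofReal ρ - nubar ν)
      = ENNReal.ofReal (ρ / (ρ - (nubar ν).toReal)) := by
    rw [ENNReal.ofReal_div_of_pos (sub_pos.2 hρν), ENNReal.ofReal_sub _ ENNReal.toReal_nonneg,
      ENNReal.ofReal_toReal hnubar]
  refine ⟨fun k hk => ?_, fun k => (h.lintegral_Ncol_ne_top hρ hnubar hlt k).lt_top⟩
  obtain ⟨k, rfl⟩ := Nat.exists_eq_add_of_le' hk
  rw [Nat.add_sub_cancel, h.lintegral_Ncol_succ_sub hρ hnubar hlt, h.levelTime_eq hρ hnubar hlt,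
    hratio, ENNReal.ofReal_mul ENNReal.toReal_nonneg, ENNReal.ofReal_toReal hnubar,
    ENNReal.ofReal_pow (div_nonneg hρ.le (sub_pos.2 hρν).le)]

/-- **Lemma (expected number of new colors between draws of color `0`).** If
`ρ > ν̄` then `E[N_k - N_{k-1}] = ν̄ (ρ/(ρ-ν̄))^k` for every `k ≥ 1`; in particular
`E[N_k] < ∞` for all `k`. -/
theorem urn_expected_new_colors
    (ρ : ℝ) (hρ : 0 < ρ) (ν : PMF ℕ) (hν0 : ν 0 < 1)
    (hnubar : nubar ν ≠ ⊤) (hρν : (nubar ν).toReal < ρ)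
    {Ω : Type*} [MeasurableSpace Ω] (P : Measure Ω)
    (ζ B : ℕ → Ω → ℕ) (h : IsUrn ρ ν P ζ B) :
    (∀ k : ℕ, 1 ≤ k →
      ∫⁻ ω, ((Ncol ζ B k ω : ℝ≥0∞) - (Ncol ζ B (k - 1) ω : ℝ≥0∞)) ∂P =
        ENNReal.ofReal
          ((nubar ν).toReal * (ρ / (ρ - (nubar ν).toReal)) ^ k)) ∧
    ∀ k : ℕ, ∫⁻ ω, (Ncol ζ B k ω : ℝ≥0∞) ∂P < ⊤ :=
  urn_expected_new_colors_general ρ hρ ν hnubar hρν P ζ B h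

end TBRWPaper
end

section
/- Suppose ρ > 1 + 2ν̄ (with ν̄ < ∞). Then there exists δ = δ(ρ,ν) > 0 such that almost surely, the crossing times of the root loop satisfy τ_k ≥ e^{δk} for all k large enough. -/
open MeasureTheory ProbabilityTheory Filter
open scoped ENNReal NNReal Topology

namespace TBRWPaper

/-- Vertices of the full planar tree `𝒯_full`: the root is `[]` and the children of a
vertex `v` are the `v ++ [i]`, `i : ℕ` (in their order of creation). -/
abbrev Vertex : Type := List ℕ

instance : MeasurableSpace Vertex := ⊤
instance : MeasurableSpace (Finset Vertex) := ⊤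

/-- The father of a vertex (by convention, the father of the root is the root itself). -/
def parent (v : Vertex) : Vertex := v.dropLast

/-- Number of children of `v` in the tree `t`. -/
def nChild (t : Finset Vertex) (v : Vertex) : ℕ :=
  (t.filter (fun w => w ≠ [] ∧ parent w = v)).card

variable {Ω : Type*} [MeasurableSpace Ω]

/-- σ-algebra of the TBRW history up to (and including) the leaf-creation step `n`;
it makes `T (n+1)` measurable and is the conditioning σ-algebra for the displacement
step producing `S (n+1)`. -/
def hist (T : ℕ → Ω → Finset Vertex) (S : ℕ → Ω → Vertex) (ξ : ℕ → Ω → ℕ) (n : ℕ) :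
    MeasurableSpace Ω :=
  ⨆ i ∈ Finset.range (n + 1),
    (MeasurableSpace.comap (T i) ⊤ ⊔ MeasurableSpace.comap (S i) ⊤ ⊔
      MeasurableSpace.comap (ξ i) ⊤)

/-- σ-algebra of the TBRW history strictly before the leaf-creation variable `ξ n`. -/
def histBefore (T : ℕ → Ω → Finset Vertex) (S : ℕ → Ω → Vertex) (ξ : ℕ → Ω → ℕ) (n : ℕ) :
    MeasurableSpace Ω :=
  (⨆ i ∈ Finset.range (n + 1),
    (MeasurableSpace.comap (T i) ⊤ ⊔ MeasurableSpace.comap (S i) ⊤)) ⊔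
  ⨆ i ∈ Finset.range n, MeasurableSpace.comap (ξ i) ⊤

/-- `IsTBRW ρ ν P T S ξ` asserts that, under the probability measure `P`, the pair of
processes `(T n, S n)` performs the `(ρ,ν)`-tree builder random walk: `T 0 = {root}`,
`S 0 = root`, at each step a `ν`-distributed number `ξ n` of new leaves (independent of
the past) is attached to `S n`, producing `T (n+1)`, and then the walker moves to the
father of `S n` with probability `ρ/(k+ρ)` and to any fixed child of `S n` in `T (n+1)`
with probability `1/(k+ρ)`, where `k` is the number of children of `S n` in `T (n+1)`
(the father of the root being the root itself, which yields the root loop). -/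
structure IsTBRW (ρ : ℝ) (ν : PMF ℕ) (P : Measure Ω)
    (T : ℕ → Ω → Finset Vertex) (S : ℕ → Ω → Vertex) (ξ : ℕ → Ω → ℕ) : Prop where
  prob : IsProbabilityMeasure P
  measT : ∀ n, Measurable (T n)
  measS : ∀ n, Measurable (S n)
  measξ : ∀ n, Measurable (ξ n)
  T_init : ∀ ω, T 0 ω = {([] : Vertex)}
  S_init : ∀ ω, S 0 ω = []
  S_mem : ∀ n ω, S n ω ∈ T n ω
  T_succ : ∀ n ω, T (n + 1) ω = T n ω ∪
      (Finset.range (ξ n ω)).image (fun i => S n ω ++ [nChild (T n ω) (S n ω) + i])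
  ξ_law : ∀ n, P.map (ξ n) = ν.toMeasure
  ξ_indep : ∀ n, Indep (MeasurableSpace.comap (ξ n) ⊤) (histBefore T S ξ n) P
  S_succ_mem : ∀ n ω, S (n + 1) ω = parent (S n ω) ∨
      (parent (S (n + 1) ω) = S n ω ∧ S (n + 1) ω ∈ T (n + 1) ω)
  step_father : ∀ n k, ∀ H : Set Ω, MeasurableSet[hist T S ξ n] H →
      P (H ∩ {ω | nChild (T (n + 1) ω) (S n ω) = k} ∩
          {ω | S (n + 1) ω = parent (S n ω)}) =
        ENNReal.ofReal (ρ / (k + ρ)) *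
          P (H ∩ {ω | nChild (T (n + 1) ω) (S n ω) = k})
  step_child : ∀ n k i, i < k → ∀ H : Set Ω, MeasurableSet[hist T S ξ n] H →
      P (H ∩ {ω | nChild (T (n + 1) ω) (S n ω) = k} ∩
          {ω | S (n + 1) ω = S n ω ++ [i]}) =
        ENNReal.ofReal (1 / (k + ρ)) *
          P (H ∩ {ω | nChild (T (n + 1) ω) (S n ω) = k})

/-- Number of crossings of the root loop during the first `n` steps. -/
def crossCount (S : ℕ → Ω → Vertex) (n : ℕ) (ω : Ω) : ℕ :=
  ((Finset.Icc 1 n).filter (fun i => S (i - 1) ω = ([] : Vertex) ∧ S i ω = [])).card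

/-- Time `τ_k` of the `k`-th crossing of the root loop, with value `∞` if this
crossing never occurs. -/
noncomputable def tauE (S : ℕ → Ω → Vertex) (k : ℕ) (ω : Ω) : ℝ≥0∞ :=
  sInf {t : ℝ≥0∞ | ∃ n : ℕ, t = n ∧ 1 ≤ n ∧ crossCount S n ω = k}

end TBRWPaper

/-!
Each visit to the root attaches a leaf with probability `1 - ν 0 > 0`. Fix `θ < 1` and `m₀` with
`ν 0 + θ ^ m₀ < θ`. Weighting each visit to the root by `θ ^ m₀` if it attaches leaves and by `1`
otherwise, and dividing by the mean weight `β < θ`, gives a martingale; hence at most `v / m₀` of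
the first `v` visits attach leaves with probability at most `(β / θ) ^ v`, and by Borel–Cantelli,
from some `V`-th visit on, the `a`-th visit to the root finds at least `a / m₀` children there.
From the root the walker crosses the loop with probability `ρ / (k + ρ)`, `k` the number of
children of the root, so these probabilities sum to at most `V + ρ m₀ (1 + log n)` up to time `n`.
Then `2 ^ (crossings) * e ^ -(sum)` is a supermartingale, and Markov's inequality with
Borel–Cantelli gives `O(log n)` crossings by time `n`, that is, `τ_k ≥ e ^ (δ k)`.
-/

namespace TBRWPaper

variable {Ω : Type*}

lemma parent_concat (v : Vertex) (i : ℕ) : parent (v ++ [i]) = v := List.dropLast_concat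

lemma nChild_union_image (t : Finset Vertex) (s : Vertex) (m : ℕ)
    (ht : ∀ i, s ++ [i] ∈ t → i < nChild t s) (v : Vertex) :
    nChild (t ∪ (Finset.range m).image (fun i => s ++ [nChild t s + i])) v
      = nChild t v + if v = s then m else 0 := by
  set c := nChild t s
  have hinj : Function.Injective (fun i : ℕ => s ++ [c + i]) := by
    intro i j hij
    simpa using hij
  have hdisj : Disjoint t ((Finset.range m).image (fun i => s ++ [c + i])) := by
    rw [Finset.disjoint_right]
    rintro _ hw hwt
    obtain ⟨i, -, rfl⟩ := Finset.mem_image.1 hw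
    exact absurd (ht _ hwt) (by omega)
  unfold nChild
  rw [Finset.filter_union, Finset.card_union_of_disjoint (Finset.disjoint_filter_filter hdisj)]
  congr 1
  split_ifs with hv
  · subst hv
    rw [Finset.filter_true_of_mem, Finset.card_image_of_injective _ hinj, Finset.card_range]
    intro w hw
    obtain ⟨i, -, rfl⟩ := Finset.mem_image.1 hw
    exact ⟨by simp, parent_concat _ _⟩
  · rw [Finset.filter_false_of_mem, Finset.card_empty]
    intro w hw
    obtain ⟨i, -, rfl⟩ := Finset.mem_image.1 hw
    rw [parent_concat]
    exact fun hc => hv hc.2.symm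

section Tree

variable [MeasurableSpace Ω] {ρ : ℝ} {ν : PMF ℕ} {P : Measure Ω}
  {T : ℕ → Ω → Finset Vertex} {S : ℕ → Ω → Vertex} {ξ : ℕ → Ω → ℕ}

lemma IsTBRW.lt_nChild_of_concat_mem (h : IsTBRW ρ ν P T S ξ) (n : ℕ) (ω : Ω)
    {v : Vertex} {i : ℕ} (hi : v ++ [i] ∈ T n ω) : i < nChild (T n ω) v := by
  induction n generalizing v i with
  | zero => simp [h.T_init] at hi
  | succ n ih =>
    rw [h.T_succ, nChild_union_image _ _ _ (fun j => ih)]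
    rw [h.T_succ] at hi
    rcases Finset.mem_union.1 hi with hi | hi
    · exact (ih hi).trans_le (Nat.le_add_right _ _)
    · obtain ⟨j, hj, hji⟩ := Finset.mem_image.1 hi
      obtain ⟨rfl, hij⟩ : S n ω = v ∧ nChild (T n ω) (S n ω) + j = i := by simpa using hji
      simp only [if_true, Finset.mem_range] at hj ⊢
      omega

lemma IsTBRW.nChild_succ (h : IsTBRW ρ ν P T S ξ) (n : ℕ) (ω : Ω) (v : Vertex) :
    nChild (T (n + 1) ω) v = nChild (T n ω) v + if v = S n ω then ξ n ω else 0 := by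
  rw [h.T_succ]
  exact nChild_union_image _ _ _ (fun _ => h.lt_nChild_of_concat_mem n ω) v

end Tree

lemma card_filter_Icc_one_succ (p : ℕ → Prop) [DecidablePred p] (n : ℕ) :
    ((Finset.Icc 1 (n + 1)).filter p).card
      = ((Finset.Icc 1 n).filter p).card + if p (n + 1) then 1 else 0 := by
  rw [← Finset.insert_Icc_right_eq_Icc_add_one (by omega), Finset.filter_insert]
  split_ifs
  · exact Finset.card_insert_of_notMem (by simp)
  · rfl

def rootVisits (S : ℕ → Ω → Vertex) (n : ℕ) (ω : Ω) : ℕ :=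
  ((Finset.Icc 1 n).filter (fun i => S i ω = [])).card

def leafVisits (S : ℕ → Ω → Vertex) (ξ : ℕ → Ω → ℕ) (v n : ℕ) (ω : Ω) : ℕ :=
  ((Finset.Icc 1 n).filter
    (fun i => S i ω = [] ∧ 1 ≤ ξ i ω ∧ rootVisits S i ω ≤ v)).card

section Counting

variable {S : ℕ → Ω → Vertex} {ξ : ℕ → Ω → ℕ}

lemma rootVisits_succ (n : ℕ) (ω : Ω) :
    rootVisits S (n + 1) ω = rootVisits S n ω + if S (n + 1) ω = [] then 1 else 0 :=
  card_filter_Icc_one_succ _ n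

lemma leafVisits_succ (v n : ℕ) (ω : Ω) :
    leafVisits S ξ v (n + 1) ω = leafVisits S ξ v n ω +
      if S (n + 1) ω = [] ∧ 1 ≤ ξ (n + 1) ω ∧ rootVisits S (n + 1) ω ≤ v then 1 else 0 :=
  card_filter_Icc_one_succ _ n

lemma crossCount_succ (n : ℕ) (ω : Ω) :
    crossCount S (n + 1) ω = crossCount S n ω + if S n ω = [] ∧ S (n + 1) ω = [] then 1 else 0 :=
  card_filter_Icc_one_succ _ n

lemma rootVisits_mono (ω : Ω) : Monotone (rootVisits S · ω) := fun _ _ hmn =>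
  Finset.card_le_card (Finset.filter_subset_filter _ (Finset.Icc_subset_Icc_right hmn))

lemma crossCount_mono (ω : Ω) : Monotone (crossCount S · ω) := fun _ _ hmn =>
  Finset.card_le_card (Finset.filter_subset_filter _ (Finset.Icc_subset_Icc_right hmn))

lemma rootVisits_le_self (n : ℕ) (ω : Ω) : rootVisits S n ω ≤ n :=
  (Finset.card_filter_le _ _).trans (by simp)

lemma rootVisits_lt_of_lt {j j' : ℕ} (hjj' : j < j') {ω : Ω} (hroot : S j' ω = []) :
    rootVisits S j ω < rootVisits S j' ω := by
  obtain ⟨m, rfl⟩ : ∃ m, j' = m + 1 := ⟨j' - 1, by omega⟩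
  have : rootVisits S j ω ≤ rootVisits S m ω := rootVisits_mono ω (by omega)
  rw [rootVisits_succ, if_pos hroot]
  omega

lemma leafVisits_succ_of_le {v n : ℕ} {ω : Ω} (hv : v ≤ rootVisits S n ω) :
    leafVisits S ξ v (n + 1) ω = leafVisits S ξ v n ω := by
  rw [leafVisits_succ, if_neg, add_zero]
  rintro ⟨hroot, -, hle⟩
  rw [rootVisits_succ, if_pos hroot] at hle
  omega

lemma IsTBRW.leafVisits_le_nChild_root [MeasurableSpace Ω] {ρ : ℝ} {ν : PMF ℕ} {P : Measure Ω}
    {T : ℕ → Ω → Finset Vertex} (h : IsTBRW ρ ν P T S ξ) (v n : ℕ) (ω : Ω) :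
    leafVisits S ξ v n ω ≤ nChild (T (n + 1) ω) [] := by
  induction n with
  | zero => exact Nat.zero_le _
  | succ n ih =>
    rw [leafVisits_succ, h.nChild_succ]
    split_ifs with h1 h2
    · omega
    · exact absurd h1.1.symm h2
    all_goals omega

end Counting

lemma lintegral_comp_eq_tsum {Ω α : Type*} [MeasurableSpace Ω] [MeasurableSpace α] [Countable α]
    [MeasurableSingletonClass α] {μ : Measure Ω} {X : Ω → α} (hX : Measurable X)
    (f : α → ℝ≥0∞) : ∫⁻ ω, f (X ω) ∂μ = ∑' a, f a * μ (X ⁻¹' {a}) := by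
  rw [← lintegral_map (measurable_of_countable f) hX, lintegral_countable']
  simp_rw [Measure.map_apply hX (measurableSet_singleton _)]

lemma measure_le_inv_of_lintegral_le_one {Ω : Type*} [MeasurableSpace Ω] {μ : Measure Ω}
    {f : Ω → ℝ≥0∞} (hf : AEMeasurable f μ) (hint : ∫⁻ ω, f ω ∂μ ≤ 1) {s : Set Ω}
    {c : ℝ≥0∞} (hs : ∀ ω ∈ s, c ≤ f ω) : μ s ≤ c⁻¹ := by
  refine ENNReal.le_inv_iff_mul_le.2 ?_
  calc μ s * c ≤ c * μ {ω | c ≤ f ω} := by rw [mul_comm]; gcongr; exact hs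
    _ ≤ ∫⁻ ω, f ω ∂μ := mul_meas_ge_le_lintegral₀ hf c
    _ ≤ 1 := hint

section History

variable {T : ℕ → Ω → Finset Vertex} {S : ℕ → Ω → Vertex} {ξ : ℕ → Ω → ℕ}
  {j n : ℕ}

lemma comap_le_hist (hj : j ≤ n) :
    MeasurableSpace.comap (T j) ⊤ ⊔ MeasurableSpace.comap (S j) ⊤ ⊔
      MeasurableSpace.comap (ξ j) ⊤ ≤ hist T S ξ n :=
  le_iSup₂ (f := fun i (_ : i ∈ Finset.range (n + 1)) => MeasurableSpace.comap (T i) ⊤ ⊔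
    MeasurableSpace.comap (S i) ⊤ ⊔ MeasurableSpace.comap (ξ i) ⊤) j
    (Finset.mem_range.2 (Nat.lt_succ_of_le hj))

lemma measurable_T_hist (hj : j ≤ n) : Measurable[hist T S ξ n] (T j) :=
  .of_comap_le (le_sup_left.trans (le_sup_left.trans (comap_le_hist hj)))

lemma measurable_S_hist (hj : j ≤ n) : Measurable[hist T S ξ n] (S j) :=
  .of_comap_le (le_sup_right.trans (le_sup_left.trans (comap_le_hist hj)))

lemma measurable_ξ_hist (hj : j ≤ n) : Measurable[hist T S ξ n] (ξ j) :=
  .of_comap_le (le_sup_right.trans (comap_le_hist hj))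

lemma comap_le_histBefore (hj : j ≤ n) :
    MeasurableSpace.comap (T j) ⊤ ⊔ MeasurableSpace.comap (S j) ⊤ ≤ histBefore T S ξ n :=
  le_sup_of_le_left <| le_iSup₂ (f := fun i (_ : i ∈ Finset.range (n + 1)) =>
    MeasurableSpace.comap (T i) ⊤ ⊔ MeasurableSpace.comap (S i) ⊤) j
    (Finset.mem_range.2 (Nat.lt_succ_of_le hj))

lemma comap_ξ_le_histBefore (hj : j < n) :
    MeasurableSpace.comap (ξ j) ⊤ ≤ histBefore T S ξ n :=
  le_sup_of_le_right <| le_iSup₂ (f := fun i (_ : i ∈ Finset.range n) =>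
    MeasurableSpace.comap (ξ i) ⊤) j (Finset.mem_range.2 hj)

lemma measurable_S_histBefore (n : ℕ) : Measurable[histBefore T S ξ n] (S n) :=
  .of_comap_le (le_sup_right.trans (comap_le_histBefore le_rfl))

lemma hist_le_histBefore_succ (n : ℕ) : hist T S ξ n ≤ histBefore T S ξ (n + 1) :=
  iSup₂_le fun _ hi => sup_le (comap_le_histBefore (Finset.mem_range.1 hi).le)
    (comap_ξ_le_histBefore (Finset.mem_range.1 hi))

lemma measurable_hist_of_forall_eq {β : Type*} [MeasurableSpace β] [Nonempty β] {F : Ω → β}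
    (hF : ∀ ω ω', (∀ j ≤ n, S j ω = S j ω' ∧ ξ j ω = ξ j ω') → F ω = F ω') :
    Measurable[hist T S ξ n] F := by
  set X : Ω → Fin (n + 1) → Vertex × ℕ := fun ω j => (S j ω, ξ j ω)
  have hX : Measurable[hist T S ξ n] X := @measurable_pi_lambda _ _ _ (hist T S ξ n) _ X fun j =>
    (measurable_S_hist j.is_le).prodMk (measurable_ξ_hist j.is_le)
  have hFX : Function.FactorsThrough F X := fun ω ω' hω => hF ω ω' fun j hj => by
    simpa [X] using congrFun hω ⟨j, Nat.lt_succ_of_le hj⟩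
  rw [← hFX.extend_comp fun _ => Classical.arbitrary β]
  exact (measurable_of_countable _).comp hX

variable [MeasurableSpace Ω] {ρ : ℝ} {ν : PMF ℕ} {P : Measure Ω}

lemma IsTBRW.hist_le (h : IsTBRW ρ ν P T S ξ) (n : ℕ) : hist T S ξ n ≤ ‹MeasurableSpace Ω› :=
  iSup₂_le fun i _ => sup_le (sup_le (h.measT i).comap_le (h.measS i).comap_le)
    (h.measξ i).comap_le

lemma IsTBRW.histBefore_le (h : IsTBRW ρ ν P T S ξ) (n : ℕ) :
    histBefore T S ξ n ≤ ‹MeasurableSpace Ω› :=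
  sup_le (iSup₂_le fun i _ => sup_le (h.measT i).comap_le (h.measS i).comap_le)
    (iSup₂_le fun i _ => (h.measξ i).comap_le)

lemma IsTBRW.measurable_T_succ_hist (h : IsTBRW ρ ν P T S ξ) (hj : j ≤ n) :
    Measurable[hist T S ξ n] (T (j + 1)) := by
  rw [show T (j + 1) = (fun x : Finset Vertex × Vertex × ℕ => x.1 ∪ (Finset.range x.2.2).image
      (fun i => x.2.1 ++ [nChild x.1 x.2.1 + i])) ∘ fun ω => (T j ω, S j ω, ξ j ω)
    from funext (h.T_succ j)]
  exact (measurable_of_countable _).comp ((measurable_T_hist hj).prodMk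
    ((measurable_S_hist hj).prodMk (measurable_ξ_hist hj)))

end History

noncomputable def loopProb (ρ : ℝ) (T : ℕ → Ω → Finset Vertex) (S : ℕ → Ω → Vertex) (n : ℕ)
    (ω : Ω) : ℝ :=
  if S n ω = [] then ρ / (nChild (T (n + 1) ω) [] + ρ) else 0

lemma loopProb_nonneg {ρ : ℝ} (hρ : 0 ≤ ρ) (T : ℕ → Ω → Finset Vertex) (S : ℕ → Ω → Vertex)
    (n : ℕ) (ω : Ω) : 0 ≤ loopProb ρ T S n ω := by
  unfold loopProb
  split_ifs
  · positivity
  · rfl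

section HistoryFunctions

variable {T : ℕ → Ω → Finset Vertex} {S : ℕ → Ω → Vertex} {ξ : ℕ → Ω → ℕ}

lemma rootVisits_congr {n : ℕ} {ω ω' : Ω} (hω : ∀ j ≤ n, S j ω = S j ω') :
    rootVisits S n ω = rootVisits S n ω' :=
  congrArg Finset.card <| Finset.filter_congr fun i hi => by
    rw [hω i (Finset.mem_Icc.1 hi).2]

lemma measurable_rootVisits_hist (n : ℕ) : Measurable[hist T S ξ n] (rootVisits S n) :=
  measurable_hist_of_forall_eq fun _ _ hω => rootVisits_congr fun j hj => (hω j hj).1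

lemma measurable_crossCount_hist (n : ℕ) : Measurable[hist T S ξ n] (crossCount S n) :=
  measurable_hist_of_forall_eq fun _ _ hω => congrArg Finset.card <|
    Finset.filter_congr fun i hi => by
      rw [(hω (i - 1) (by simp at hi; omega)).1, (hω i (Finset.mem_Icc.1 hi).2).1]

lemma measurable_leafVisits_hist (v n : ℕ) : Measurable[hist T S ξ n] (leafVisits S ξ v n) :=
  measurable_hist_of_forall_eq fun _ _ hω => congrArg Finset.card <|
    Finset.filter_congr fun i hi => by
      have hi := (Finset.mem_Icc.1 hi).2
      rw [(hω i hi).1, (hω i hi).2, rootVisits_congr fun j hj => (hω j (hj.trans hi)).1]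

variable [MeasurableSpace Ω] {ρ : ℝ} {ν : PMF ℕ} {P : Measure Ω}

lemma IsTBRW.measurable_loopProb_hist (h : IsTBRW ρ ν P T S ξ) {j n : ℕ} (hj : j ≤ n) :
    Measurable[hist T S ξ n] (loopProb ρ T S j) :=
  (measurable_of_countable fun x : Vertex × Finset Vertex =>
      if x.1 = [] then ρ / (nChild x.2 [] + ρ) else 0).comp
    ((measurable_S_hist hj).prodMk (h.measurable_T_succ_hist hj))

lemma IsTBRW.lintegral_mul_comp_ξ (h : IsTBRW ρ ν P T S ξ) (n : ℕ) {F : Ω → ℝ≥0∞}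
    (hF : Measurable[histBefore T S ξ n] F) (g : ℕ → ℝ≥0∞) :
    ∫⁻ ω, F ω * g (ξ n ω) ∂P = (∫⁻ ω, F ω ∂P) * ∑' k, g k * ν k := by
  rw [lintegral_mul_eq_lintegral_mul_lintegral_of_independent_measurableSpace
    (g := fun ω => g (ξ n ω)) (h.histBefore_le n) (h.measξ n).comap_le (h.ξ_indep n).symm hF
    ((measurable_of_countable g).comp (Measurable.of_comap_le le_rfl))]
  congr 1
  rw [← lintegral_map (measurable_of_countable g) (h.measξ n), h.ξ_law n, lintegral_countable']
  simp_rw [PMF.toMeasure_apply_singleton _ _ (measurableSet_singleton _)]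

lemma IsTBRW.setLIntegral_father (h : IsTBRW ρ ν P T S ξ) (n : ℕ) {ψ : Ω → ℝ≥0∞}
    (hψ : Measurable[hist T S ξ n] ψ) :
    ∫⁻ ω in {ω | S (n + 1) ω = parent (S n ω)}, ψ ω ∂P
      = ∫⁻ ω, ψ ω * ENNReal.ofReal (ρ / (nChild (T (n + 1) ω) (S n ω) + ρ)) ∂P := by
  set F := {ω | S (n + 1) ω = parent (S n ω)}
  set N : Ω → ℕ := fun ω => nChild (T (n + 1) ω) (S n ω)
  set r : ℕ → ℝ≥0∞ := fun k => ENNReal.ofReal (ρ / (k + ρ))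
  have hm := h.hist_le n
  have hN : Measurable N := (measurable_of_countable fun x : Finset Vertex × Vertex =>
    nChild x.1 x.2).comp ((h.measT (n + 1)).prodMk (h.measS n))
  have hF : MeasurableSet F :=
    (h.measS (n + 1)).prodMk (h.measS n) (Set.to_countable {x : Vertex × Vertex |
      x.1 = parent x.2}).measurableSet
  have hsets : ∀ H, MeasurableSet[hist T S ξ n] H → P (H ∩ F) = ∫⁻ ω in H, r (N ω) ∂P := by
    intro H hH
    have hHF := (hm _ hH).inter hF
    calc P (H ∩ F) = ∫⁻ _ in H ∩ F, 1 ∂P := by rw [setLIntegral_one]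
      _ = ∑' k, r k * P (H ∩ N ⁻¹' {k}) := by
        rw [lintegral_comp_eq_tsum (f := fun _ => 1) hN]
        refine tsum_congr fun k => ?_
        rw [Measure.restrict_apply (hN (measurableSet_singleton k)), one_mul,
          show N ⁻¹' {k} ∩ (H ∩ F) = H ∩ {ω | N ω = k} ∩ F by ext; simp; tauto]
        exact h.step_father n k H hH
      _ = ∫⁻ ω in H, r (N ω) ∂P := by
        rw [lintegral_comp_eq_tsum hN]
        simp_rw [Measure.restrict_apply (hN (measurableSet_singleton _)), Set.inter_comm]
  have htrim : (P.restrict F).trim hm = (P.withDensity fun ω => r (N ω)).trim hm := by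
    refine @Measure.ext _ (hist T S ξ n) _ _ fun H hH => ?_
    rw [trim_measurableSet_eq hm hH, trim_measurableSet_eq hm hH,
      Measure.restrict_apply (hm _ hH), withDensity_apply _ (hm _ hH), hsets H hH]
  calc ∫⁻ ω in F, ψ ω ∂P = ∫⁻ ω, ψ ω ∂(P.restrict F).trim hm := (lintegral_trim hm hψ).symm
    _ = ∫⁻ ω, ψ ω ∂P.withDensity fun ω => r (N ω) := by rw [htrim, lintegral_trim hm hψ]
    _ = ∫⁻ ω, ψ ω * r (N ω) ∂P := by
      rw [lintegral_withDensity_eq_lintegral_mul _ (f := fun ω => r (N ω))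
        ((measurable_of_countable r).comp hN)
        (hψ.mono hm le_rfl)]
      simp_rw [Pi.mul_apply, mul_comm]

lemma IsTBRW.setLIntegral_rootLoop (h : IsTBRW ρ ν P T S ξ) (n : ℕ) {ψ : Ω → ℝ≥0∞}
    (hψ : Measurable[hist T S ξ n] ψ) :
    ∫⁻ ω in {ω | S n ω = [] ∧ S (n + 1) ω = []}, ψ ω ∂P
      = ∫⁻ ω, ψ ω * ENNReal.ofReal (loopProb ρ T S n ω) ∂P := by
  have hR : MeasurableSet[hist T S ξ n] {ω | S n ω = []} :=
    measurable_S_hist le_rfl (measurableSet_singleton _)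
  have hloop : {ω | S n ω = [] ∧ S (n + 1) ω = []}
      = {ω | S n ω = []} ∩ {ω | S (n + 1) ω = parent (S n ω)} := by
    ext ω
    simp only [Set.mem_ofPred_eq, Set.mem_inter_iff]
    constructor
    · rintro ⟨h0, h1⟩
      exact ⟨h0, by rw [h0, h1]; rfl⟩
    · rintro ⟨h0, h1⟩
      exact ⟨h0, by rw [h1, h0]; rfl⟩
  rw [hloop, ← Measure.restrict_restrict (h.hist_le n _ hR), ← lintegral_indicator
    (h.hist_le n _ hR), h.setLIntegral_father n (hψ.indicator hR)]
  refine lintegral_congr fun ω => ?_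
  by_cases h0 : S n ω = []
  · simp [loopProb, h0]
  · simp [loopProb, h0]

end HistoryFunctions

/-- A supermartingale because `1 + p ≤ e ^ p`, where `p = loopProb ρ T S n` is the conditional
probability of crossing the root loop at step `n + 1`. -/
noncomputable def loopSupermartingale (ρ : ℝ) (T : ℕ → Ω → Finset Vertex) (S : ℕ → Ω → Vertex)
    (n : ℕ) (ω : Ω) : ℝ≥0∞ :=
  ENNReal.ofReal (2 ^ crossCount S n ω * Real.exp (-∑ j ∈ Finset.range n, loopProb ρ T S j ω))

def leafWeight (w : ℝ≥0∞) (k : ℕ) : ℝ≥0∞ := if k = 0 then 1 else w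

noncomputable def leafMean (ν : PMF ℕ) (w : ℝ≥0∞) : ℝ≥0∞ := ∑' k, leafWeight w k * ν k

/-- Up to the `v`-th visit to the root, each visit multiplies this by
`leafWeight w ξ / leafMean ν w`, a factor of conditional mean one; afterwards it is frozen. -/
noncomputable def leafMartingale (ν : PMF ℕ) (w : ℝ≥0∞) (S : ℕ → Ω → Vertex) (ξ : ℕ → Ω → ℕ)
    (v n : ℕ) (ω : Ω) : ℝ≥0∞ :=
  w ^ leafVisits S ξ v n ω * (leafMean ν w)⁻¹ ^ min (rootVisits S n ω) v

lemma leafMartingale_succ {ν : PMF ℕ} {S : ℕ → Ω → Vertex} {ξ : ℕ → Ω → ℕ} (w : ℝ≥0∞)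
    (v n : ℕ) (ω : Ω) :
    leafMartingale ν w S ξ v (n + 1) ω
      = {ω | S (n + 1) ω = [] ∧ rootVisits S n ω < v}ᶜ.indicator
          (leafMartingale ν w S ξ v n) ω
        + (leafMean ν w)⁻¹ * ({ω | S (n + 1) ω = [] ∧ rootVisits S n ω < v}.indicator
          (leafMartingale ν w S ξ v n) ω * leafWeight w (ξ (n + 1) ω)) := by
  simp only [leafMartingale, leafVisits_succ, rootVisits_succ, Set.indicator_apply,
    Set.mem_compl_iff, Set.mem_ofPred_eq]
  by_cases hS : S (n + 1) ω = []
  · simp only [hS, if_true, true_and]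
    by_cases hA : rootVisits S n ω < v
    · rw [min_eq_left (by omega), min_eq_left hA.le]
      by_cases hξ : ξ (n + 1) ω = 0
      · simp [hA, hξ, leafWeight, pow_succ, mul_comm, mul_left_comm]
      · simp [hA, hξ, leafWeight, Nat.one_le_iff_ne_zero, pow_succ]
        ring
    · rw [min_eq_right (by omega), min_eq_right (by omega)]
      simp [hA]
  · simp [hS]

lemma measurable_leafMartingale_hist {T : ℕ → Ω → Finset Vertex} {S : ℕ → Ω → Vertex}
    {ξ : ℕ → Ω → ℕ} {ν : PMF ℕ} (w : ℝ≥0∞) (v n : ℕ) :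
    Measurable[hist T S ξ n] (leafMartingale ν w S ξ v n) :=
  (measurable_of_countable fun x : ℕ × ℕ => w ^ x.1 * (leafMean ν w)⁻¹ ^ min x.2 v).comp
    ((measurable_leafVisits_hist v n).prodMk (measurable_rootVisits_hist n))

lemma loopSupermartingale_succ {ρ : ℝ} {T : ℕ → Ω → Finset Vertex} {S : ℕ → Ω → Vertex}
    (n : ℕ) (ω : Ω) : loopSupermartingale ρ T S (n + 1) ω
      = (if S n ω = [] ∧ S (n + 1) ω = [] then 2 else 1) * loopSupermartingale ρ T S n ω *
          ENNReal.ofReal (Real.exp (-loopProb ρ T S n ω)) := by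
  rw [loopSupermartingale, loopSupermartingale, crossCount_succ, Finset.sum_range_succ, mul_assoc,
    ← ENNReal.ofReal_mul (by positivity)]
  split_ifs
  · rw [← ENNReal.ofReal_ofNat 2, ← ENNReal.ofReal_mul zero_le_two]
    congr 1
    rw [pow_succ, neg_add, Real.exp_add]
    ring
  · rw [one_mul, add_zero, neg_add, Real.exp_add, mul_assoc]

section Supermartingales

variable [MeasurableSpace Ω] {ρ : ℝ} {ν : PMF ℕ} {P : Measure Ω}
  {T : ℕ → Ω → Finset Vertex} {S : ℕ → Ω → Vertex} {ξ : ℕ → Ω → ℕ}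

lemma IsTBRW.measurable_loopSupermartingale_hist (h : IsTBRW ρ ν P T S ξ) (n : ℕ) :
    Measurable[hist T S ξ n] (loopSupermartingale ρ T S n) :=
  ENNReal.measurable_ofReal.comp
    (((measurable_of_countable fun k : ℕ => (2 : ℝ) ^ k).comp (measurable_crossCount_hist n)).mul
    (Real.measurable_exp.comp (Finset.measurable_sum _ fun _ hj =>
      h.measurable_loopProb_hist (Finset.mem_range.1 hj).le).neg))

lemma IsTBRW.lintegral_loopSupermartingale_succ_le (h : IsTBRW ρ ν P T S ξ) (hρ : 0 ≤ ρ)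
    (n : ℕ) : ∫⁻ ω, loopSupermartingale ρ T S (n + 1) ω ∂P
      ≤ ∫⁻ ω, loopSupermartingale ρ T S n ω ∂P := by
  set p := loopProb ρ T S n
  set ψ : Ω → ℝ≥0∞ := fun ω => loopSupermartingale ρ T S n ω * ENNReal.ofReal (Real.exp (-p ω))
  set C := {ω | S n ω = [] ∧ S (n + 1) ω = []}
  have hψ : Measurable[hist T S ξ n] ψ := (h.measurable_loopSupermartingale_hist n).mul
    (ENNReal.measurable_ofReal.comp (Real.measurable_exp.comp
      (h.measurable_loopProb_hist le_rfl).neg))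
  have hψm : Measurable ψ := hψ.mono (h.hist_le n) le_rfl
  have hC : MeasurableSet C :=
    (h.measS n).prodMk (h.measS (n + 1)) (Set.to_countable {x : Vertex × Vertex |
      x.1 = [] ∧ x.2 = []}).measurableSet
  have hsplit : ∀ ω, loopSupermartingale ρ T S (n + 1) ω = ψ ω + C.indicator ψ ω := by
    intro ω
    rw [loopSupermartingale_succ]
    by_cases hω : S n ω = [] ∧ S (n + 1) ω = []
    · rw [if_pos hω, Set.indicator_of_mem (show ω ∈ C from hω), mul_assoc, two_mul]
    · rw [if_neg hω, Set.indicator_of_notMem (show ω ∉ C from hω), one_mul, add_zero]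
  have hfactor : ∀ ω, ENNReal.ofReal (Real.exp (-p ω)) * (1 + ENNReal.ofReal (p ω)) ≤ 1 := by
    intro ω
    rw [← ENNReal.ofReal_one, ← ENNReal.ofReal_add zero_le_one (loopProb_nonneg hρ T S n ω),
      ← ENNReal.ofReal_mul (Real.exp_pos _).le]
    refine ENNReal.ofReal_le_ofReal ?_
    calc Real.exp (-p ω) * (1 + p ω) ≤ Real.exp (-p ω) * Real.exp (p ω) := by
          gcongr
          linarith [Real.add_one_le_exp (p ω)]
      _ = 1 := by rw [← Real.exp_add, neg_add_cancel, Real.exp_zero]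
  calc ∫⁻ ω, loopSupermartingale ρ T S (n + 1) ω ∂P
      = ∫⁻ ω, ψ ω ∂P + ∫⁻ ω in C, ψ ω ∂P := by
        rw [lintegral_congr hsplit, lintegral_add_left hψm, lintegral_indicator hC]
    _ = ∫⁻ ω, loopSupermartingale ρ T S n ω *
          (ENNReal.ofReal (Real.exp (-p ω)) * (1 + ENNReal.ofReal (p ω))) ∂P := by
        rw [h.setLIntegral_rootLoop n hψ, ← lintegral_add_left hψm]
        simp_rw [ψ, mul_add, mul_one, mul_assoc]
        rfl
    _ ≤ ∫⁻ ω, loopSupermartingale ρ T S n ω ∂P :=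
        lintegral_mono fun ω => mul_le_of_le_one_right' (hfactor ω)

lemma IsTBRW.lintegral_loopSupermartingale_le_one (h : IsTBRW ρ ν P T S ξ) (hρ : 0 ≤ ρ)
    (n : ℕ) : ∫⁻ ω, loopSupermartingale ρ T S n ω ∂P ≤ 1 := by
  have := h.prob
  induction n with
  | zero => simp [loopSupermartingale, crossCount]
  | succ n ih => exact (h.lintegral_loopSupermartingale_succ_le hρ n).trans ih

lemma IsTBRW.lintegral_leafMartingale (h : IsTBRW ρ ν P T S ξ) {w : ℝ≥0∞}
    (hβ0 : leafMean ν w ≠ 0) (hβ : leafMean ν w ≠ ⊤) (v n : ℕ) :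
    ∫⁻ ω, leafMartingale ν w S ξ v n ω ∂P = 1 := by
  have := h.prob
  induction n with
  | zero => simp [leafMartingale, leafVisits, rootVisits]
  | succ n ih =>
    set N := leafMartingale ν w S ξ v n
    set B := {ω | S (n + 1) ω = [] ∧ rootVisits S n ω < v}
    have hN : Measurable[hist T S ξ n] N := measurable_leafMartingale_hist w v n
    have hB : MeasurableSet[histBefore T S ξ (n + 1)] B :=
      (measurable_S_histBefore (n + 1) (measurableSet_singleton [])).inter
        (hist_le_histBefore_succ n _ (measurable_rootVisits_hist n (measurableSet_Iio (a := v))))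
    have hNB : Measurable[histBefore T S ξ (n + 1)] (B.indicator N) :=
      (hN.mono (hist_le_histBefore_succ n) le_rfl).indicator hB
    have hBm := h.histBefore_le (n + 1) _ hB
    have hNc : Measurable (Bᶜ.indicator N) :=
      (hN.mono (h.hist_le n) le_rfl).indicator hBm.compl
    rw [← ih, lintegral_congr (leafMartingale_succ w v n), lintegral_add_left hNc,
      lintegral_const_mul' _ _ (ENNReal.inv_ne_top.2 hβ0), h.lintegral_mul_comp_ξ (n + 1) hNB,
      ← leafMean, mul_comm _ (leafMean ν w), ← mul_assoc, ENNReal.inv_mul_cancel hβ0 hβ, one_mul,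
      ← lintegral_add_left hNc]
    exact lintegral_congr fun ω => congrFun (Set.indicator_compl_add_self B N) ω

end Supermartingales

lemma leafMean_le_add (ν : PMF ℕ) (w : ℝ≥0∞) : leafMean ν w ≤ ν 0 + w := by
  calc leafMean ν w ≤ ∑' k, ((if k = 0 then ν 0 else 0) + w * ν k) :=
        ENNReal.tsum_le_tsum fun k => by
          unfold leafWeight
          split_ifs with hk
          · subst hk
            simp
          · simp
    _ = ν 0 + w := by
        rw [ENNReal.tsum_add, tsum_ite_eq, ENNReal.tsum_mul_left, PMF.tsum_coe, mul_one]

lemma le_leafMean (ν : PMF ℕ) {w : ℝ≥0∞} (hw : w ≤ 1) : w ≤ leafMean ν w :=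
  calc w = ∑' k, w * ν k := by rw [ENNReal.tsum_mul_left, PMF.tsum_coe, mul_one]
    _ ≤ leafMean ν w := ENNReal.tsum_le_tsum fun k => by
        unfold leafWeight
        split_ifs
        · exact mul_le_mul_left hw _
        · exact le_rfl

lemma exists_leafMean_pow_lt {ν : PMF ℕ} (hν0 : ν 0 < 1) :
    ∃ θ : ℝ≥0∞, ∃ m₀ : ℕ, θ ≤ 1 ∧ leafMean ν (θ ^ m₀) < θ := by
  obtain ⟨θ, hν0θ, hθ1⟩ := exists_between hν0
  have hlim : Tendsto (fun m => ν 0 + θ ^ m) atTop (𝓝 (ν 0)) := by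
    simpa using tendsto_const_nhds.add (ENNReal.tendsto_pow_atTop_nhds_zero_of_lt_one hθ1)
  obtain ⟨m₀, hm₀⟩ := (hlim.eventually (gt_mem_nhds hν0θ)).exists
  exact ⟨θ, m₀, hθ1.le, (leafMean_le_add ν _).trans_lt hm₀⟩

def LeafRich (S : ℕ → Ω → Vertex) (ξ : ℕ → Ω → ℕ) (m₀ V : ℕ) (ω : Ω) : Prop :=
  ∀ n, V ≤ rootVisits S n ω →
    rootVisits S n ω < m₀ * leafVisits S ξ (rootVisits S n ω) n ω

section LeafRich

variable [MeasurableSpace Ω] {ρ : ℝ} {ν : PMF ℕ} {P : Measure Ω}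
  {T : ℕ → Ω → Finset Vertex} {S : ℕ → Ω → Vertex} {ξ : ℕ → Ω → ℕ} {θ : ℝ≥0∞} {m₀ : ℕ}

lemma IsTBRW.measure_leafPoor_le (h : IsTBRW ρ ν P T S ξ) (hθ : θ ≤ 1)
    (hβθ : leafMean ν (θ ^ m₀) < θ) (v n : ℕ) :
    P {ω | v ≤ rootVisits S n ω ∧ m₀ * leafVisits S ξ v n ω ≤ v}
      ≤ (leafMean ν (θ ^ m₀) / θ) ^ v := by
  have hθ0 : θ ≠ 0 := (pos_of_gt hβθ).ne'
  have hβ0 : leafMean ν (θ ^ m₀) ≠ 0 := ne_of_gt <|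
    (pos_iff_ne_zero.2 (pow_ne_zero m₀ hθ0)).trans_le (le_leafMean ν (pow_le_one₀ zero_le hθ))
  have hβ : leafMean ν (θ ^ m₀) ≠ ⊤ := ne_top_of_lt hβθ
  rw [← ENNReal.inv_div (Or.inl hβ) (Or.inl hβ0), ← ENNReal.inv_pow]
  refine measure_le_inv_of_lintegral_le_one
    ((measurable_leafMartingale_hist _ v n).mono (h.hist_le n) le_rfl).aemeasurable
    (h.lintegral_leafMartingale hβ0 hβ v n).le ?_
  rintro ω ⟨hA, hL⟩
  rw [leafMartingale, min_eq_right hA, ← pow_mul, div_eq_mul_inv, mul_pow]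
  exact mul_le_mul_left (pow_le_pow_right_of_le_one' hθ hL) _

lemma IsTBRW.measure_iUnion_leafPoor_le (h : IsTBRW ρ ν P T S ξ) (hθ : θ ≤ 1)
    (hβθ : leafMean ν (θ ^ m₀) < θ) (v : ℕ) :
    P (⋃ n, {ω | v ≤ rootVisits S n ω ∧ m₀ * leafVisits S ξ v n ω ≤ v})
      ≤ (leafMean ν (θ ^ m₀) / θ) ^ v := by
  have hmono : Monotone fun n => {ω | v ≤ rootVisits S n ω ∧ m₀ * leafVisits S ξ v n ω ≤ v} :=
    monotone_nat_of_le_succ fun n ω ⟨hA, hL⟩ =>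
      ⟨hA.trans (rootVisits_mono ω n.le_succ), (leafVisits_succ_of_le hA).symm ▸ hL⟩
  rw [hmono.measure_iUnion]
  exact iSup_le fun n => h.measure_leafPoor_le hθ hβθ v n

lemma IsTBRW.ae_exists_leafRich (h : IsTBRW ρ ν P T S ξ) (hθ : θ ≤ 1)
    (hβθ : leafMean ν (θ ^ m₀) < θ) : ∀ᵐ ω ∂P, ∃ V, LeafRich S ξ m₀ V ω := by
  have hr : leafMean ν (θ ^ m₀) / θ < 1 :=
    (ENNReal.div_lt_iff (Or.inl (pos_of_gt hβθ).ne') (Or.inl (ne_top_of_le_ne_top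
      ENNReal.one_ne_top hθ))).2 (by rwa [one_mul])
  have hgeom : ∑' v : ℕ, (leafMean ν (θ ^ m₀) / θ) ^ v ≠ ⊤ := by
    rw [ENNReal.tsum_geometric]
    exact ENNReal.inv_ne_top.2 (tsub_pos_of_lt hr).ne'
  have hsum : ∑' v, P (⋃ n, {ω | v ≤ rootVisits S n ω ∧ m₀ * leafVisits S ξ v n ω ≤ v}) ≠ ⊤ :=
    ne_top_of_le_ne_top hgeom
      (ENNReal.tsum_le_tsum fun v => h.measure_iUnion_leafPoor_le hθ hβθ v)
  filter_upwards [ae_eventually_notMem hsum] with ω hω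
  obtain ⟨V, hV⟩ := eventually_atTop.1 hω
  refine ⟨V, fun n hn => lt_of_not_ge fun hpoor => hV _ hn (Set.mem_iUnion.2 ⟨n, le_rfl, hpoor⟩)⟩

end LeafRich

lemma sum_ite_rootVisits_le (S : ℕ → Ω → Vertex) (ω : Ω) {g : ℕ → ℝ} (hg : ∀ a, 0 ≤ g a)
    (n : ℕ) : ∑ j ∈ Finset.range n, (if S j ω = [] then g (rootVisits S j ω) else 0)
      ≤ ∑ a ∈ Finset.range n, g a := by
  rw [← Finset.sum_filter, ← Finset.sum_image (g := fun j => rootVisits S j ω)]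
  · refine Finset.sum_le_sum_of_subset_of_nonneg (fun a ha => ?_) fun a _ _ => hg a
    obtain ⟨j, hj, rfl⟩ := Finset.mem_image.1 ha
    exact Finset.mem_range.2 ((rootVisits_le_self j ω).trans_lt
      (Finset.mem_range.1 (Finset.mem_filter.1 hj).1))
  · intro x hx y hy hxy
    have hx := (Finset.mem_filter.1 hx).2
    have hy := (Finset.mem_filter.1 hy).2
    by_contra hne
    rcases Nat.lt_or_gt_of_ne hne with hlt | hlt
    · exact (rootVisits_lt_of_lt hlt hy).ne hxy
    · exact (rootVisits_lt_of_lt hlt hx).ne hxy.symm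

lemma exp_mul_log_sub_le_inv_sq {c : ℝ} (hc : 0 ≤ c) (n : ℕ) :
    Real.exp (c * Real.log n - (c + 2) * Real.log (n + 1)) ≤ (((n : ℝ) + 1) ^ 2)⁻¹ := by
  have hlog : Real.log n ≤ Real.log (n + 1) := by
    rcases n.eq_zero_or_pos with rfl | hn
    · simp
    · exact Real.log_le_log (by positivity) (by linarith)
  calc Real.exp (c * Real.log n - (c + 2) * Real.log (n + 1))
      ≤ Real.exp (-(2 * Real.log (n + 1))) := by
        gcongr
        nlinarith [mul_le_mul_of_nonneg_left hlog hc]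
    _ = (((n : ℝ) + 1) ^ 2)⁻¹ := by
        rw [Real.exp_neg, ← Nat.cast_ofNat, ← Real.log_pow, Real.exp_log (by positivity)]

lemma tsum_ofReal_inv_add_one_sq_ne_top :
    ∑' n : ℕ, ENNReal.ofReal (((n : ℝ) + 1) ^ 2)⁻¹ ≠ ⊤ := by
  have hsummable : Summable fun n : ℕ => (((n : ℝ) + 1) ^ 2)⁻¹ := by
    simpa [Nat.cast_add] using (summable_nat_add_iff 1).2 (Real.summable_nat_pow_inv.2 one_lt_two)
  rw [← ENNReal.ofReal_tsum_of_nonneg (fun n => by positivity) hsummable]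
  exact ENNReal.ofReal_ne_top

section Compensator

variable [MeasurableSpace Ω] {ρ : ℝ} {ν : PMF ℕ} {P : Measure Ω}
  {T : ℕ → Ω → Finset Vertex} {S : ℕ → Ω → Vertex} {ξ : ℕ → Ω → ℕ} {m₀ V : ℕ} {ω : Ω}

lemma IsTBRW.loopProb_le (h : IsTBRW ρ ν P T S ξ) (hρ : 0 ≤ ρ) (hrich : LeafRich S ξ m₀ V ω)
    (j : ℕ) : loopProb ρ T S j ω ≤ if S j ω = [] then
      (if rootVisits S j ω < V then 1 else 0) + ρ * m₀ / (rootVisits S j ω + 1) else 0 := by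
  unfold loopProb
  have hN := (Nat.cast_nonneg (α := ℝ) (nChild (T (j + 1) ω) []))
  split_ifs with hS hA
  · have : ρ / (nChild (T (j + 1) ω) [] + ρ) ≤ 1 := div_le_one_of_le₀ (by linarith) (by linarith)
    have : 0 ≤ ρ * m₀ / (rootVisits S j ω + 1) := by positivity
    linarith
  · have hrich := hrich j (not_lt.1 hA)
    have hleaf := h.leafVisits_le_nChild_root (rootVisits S j ω) j ω
    have hcast : (rootVisits S j ω : ℝ) + 1 ≤ m₀ * nChild (T (j + 1) ω) [] := by
      exact_mod_cast hrich.trans_le (Nat.mul_le_mul_left m₀ hleaf)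
    rw [zero_add, div_le_div_iff₀ (by nlinarith) (by positivity)]
    nlinarith [mul_le_mul_of_nonneg_left hcast hρ, mul_nonneg (mul_nonneg hρ
      (Nat.cast_nonneg (α := ℝ) m₀)) hρ]
  · exact le_rfl

lemma IsTBRW.sum_loopProb_le (h : IsTBRW ρ ν P T S ξ) (hρ : 0 ≤ ρ)
    (hrich : LeafRich S ξ m₀ V ω) (n : ℕ) :
    ∑ j ∈ Finset.range n, loopProb ρ T S j ω ≤ V + ρ * m₀ * (1 + Real.log n) := by
  calc ∑ j ∈ Finset.range n, loopProb ρ T S j ω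
      ≤ ∑ j ∈ Finset.range n, if S j ω = [] then
          (if rootVisits S j ω < V then 1 else 0) + ρ * m₀ / (rootVisits S j ω + 1) else 0 :=
        Finset.sum_le_sum fun j _ => h.loopProb_le hρ hrich j
    _ ≤ ∑ a ∈ Finset.range n, ((if a < V then 1 else 0) + ρ * m₀ / (a + 1)) :=
        sum_ite_rootVisits_le S ω
          (g := fun a => (if a < V then 1 else 0) + ρ * m₀ / (a + 1)) (fun a => by positivity) n
    _ = ((Finset.range n).filter (· < V)).card + ρ * m₀ * harmonic n := by
        rw [Finset.sum_add_distrib, Finset.sum_boole, harmonic]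
        push_cast
        rw [Finset.mul_sum]
        simp_rw [div_eq_mul_inv]
    _ ≤ V + ρ * m₀ * (1 + Real.log n) := by
        gcongr
        · exact_mod_cast (Finset.card_le_card fun a ha => Finset.mem_range.2
            (Finset.mem_filter.1 ha).2).trans (Finset.card_range V).le
        · exact harmonic_le_one_add_log n

lemma IsTBRW.measure_leafRich_crossCount_ge_le (h : IsTBRW ρ ν P T S ξ) (hρ : 0 ≤ ρ)
    (m₀ V n : ℕ) (L : ℝ) :
    P {ω | LeafRich S ξ m₀ V ω ∧ L ≤ crossCount S n ω}
      ≤ ENNReal.ofReal (Real.exp (V + ρ * m₀ * (1 + Real.log n) - L * Real.log 2)) := by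
  rw [← neg_sub, Real.exp_neg, ENNReal.ofReal_inv_of_pos (Real.exp_pos _)]
  refine measure_le_inv_of_lintegral_le_one
    ((h.measurable_loopSupermartingale_hist n).mono (h.hist_le n) le_rfl).aemeasurable
    (h.lintegral_loopSupermartingale_le_one hρ n) ?_
  rintro ω ⟨hrich, hL⟩
  refine ENNReal.ofReal_le_ofReal ?_
  rw [sub_eq_add_neg, Real.exp_add]
  gcongr
  · calc Real.exp (L * Real.log 2) ≤ Real.exp (crossCount S n ω * Real.log 2) := by gcongr
      _ = 2 ^ crossCount S n ω := by rw [Real.exp_nat_mul, Real.exp_log two_pos]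
  · exact h.sum_loopProb_le hρ hrich n

lemma IsTBRW.ae_eventually_crossCount_lt (h : IsTBRW ρ ν P T S ξ) (hρ : 0 ≤ ρ) (m₀ V : ℕ) :
    ∀ᵐ ω ∂P, LeafRich S ξ m₀ V ω → ∀ᶠ n in atTop, (crossCount S n ω : ℝ)
      < (V + ρ * m₀) / Real.log 2 + (ρ * m₀ + 2) / Real.log 2 * Real.log (n + 1) := by
  set L : ℕ → ℝ := fun n => (V + ρ * m₀) / Real.log 2 + (ρ * m₀ + 2) / Real.log 2 *
    Real.log (n + 1)
  have hbound : ∀ n : ℕ, P {ω | LeafRich S ξ m₀ V ω ∧ L n ≤ crossCount S n ω}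
      ≤ ENNReal.ofReal (((n : ℝ) + 1) ^ 2)⁻¹ := by
    intro n
    have hL : V + ρ * m₀ * (1 + Real.log n) - L n * Real.log 2
        = ρ * m₀ * Real.log n - (ρ * m₀ + 2) * Real.log (n + 1) := by
      have := Real.log_pos one_lt_two
      simp only [L]
      field_simp
      ring
    refine (h.measure_leafRich_crossCount_ge_le hρ m₀ V n (L n)).trans
      (ENNReal.ofReal_le_ofReal ?_)
    rw [hL]
    exact exp_mul_log_sub_le_inv_sq (by positivity) n
  have hsum : ∑' n, P {ω | LeafRich S ξ m₀ V ω ∧ L n ≤ crossCount S n ω} ≠ ⊤ :=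
    ne_top_of_le_ne_top tsum_ofReal_inv_add_one_sq_ne_top (ENNReal.tsum_le_tsum hbound)
  filter_upwards [ae_eventually_notMem hsum] with ω hω hrich
  exact hω.mono fun n hn => lt_of_not_ge fun hge => hn ⟨hrich, hge⟩

end Compensator

lemma log_add_one_le_log_add_one {x : ℝ} (hx : 1 ≤ x) : Real.log (x + 1) ≤ Real.log x + 1 := by
  calc Real.log (x + 1) ≤ Real.log (2 * x) := Real.log_le_log (by linarith) (by linarith)
    _ = Real.log 2 + Real.log x := Real.log_mul two_ne_zero (by linarith)
    _ ≤ Real.log x + 1 := by linarith [Real.log_two_lt_d9]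

lemma exp_le_tauE_of_crossCount_lt {S : ℕ → Ω → Vertex} {ω : Ω} {a b : ℝ} (hb : 0 ≤ b)
    (hC : ∀ᶠ n in atTop, (crossCount S n ω : ℝ) < a + b * Real.log (n + 1)) :
    ∀ᶠ k : ℕ in atTop, ENNReal.ofReal (Real.exp ((2 * (b + 1))⁻¹ * k)) ≤ tauE S k ω := by
  obtain ⟨N, hN⟩ := eventually_atTop.1 hC
  set δ := (2 * (b + 1))⁻¹
  have hbδ : b * δ ≤ 1 / 2 := by
    rw [mul_inv_le_iff₀ (by positivity)]
    linarith
  filter_upwards [tendsto_natCast_atTop_atTop.eventually_gt_atTop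
    (max (2 * (a + b)) (a + b * Real.log (N + 1)))] with k hk
  refine le_sInf ?_
  rintro t ⟨n, rfl, hn, rfl⟩
  rw [← ENNReal.ofReal_natCast]
  refine ENNReal.ofReal_le_ofReal (le_of_not_gt fun hlt => ?_)
  have hn1 : (1 : ℝ) ≤ n := by exact_mod_cast hn
  rcases le_or_gt N n with hNn | hnN
  · have hlog : Real.log n < δ * crossCount S n ω := by
      rw [← Real.log_exp (δ * crossCount S n ω)]
      exact Real.log_lt_log (by linarith) hlt
    have := log_add_one_le_log_add_one hn1
    nlinarith [hN n hNn, le_max_left (2 * (a + b)) (a + b * Real.log (N + 1)),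
      mul_le_mul_of_nonneg_left this hb, mul_le_mul_of_nonneg_left hlog.le hb,
      Nat.cast_nonneg (α := ℝ) (crossCount S n ω)]
  · have : (crossCount S n ω : ℝ) ≤ crossCount S N ω := by
      exact_mod_cast crossCount_mono ω hnN.le
    linarith [hN N le_rfl, le_max_right (2 * (a + b)) (a + b * Real.log (N + 1))]

theorem tbrw_tau_exponential_growth_general
    (ρ : ℝ) (hρ : 0 < ρ) (ν : PMF ℕ) (hν0 : ν 0 < 1)
    {Ω : Type*} [MeasurableSpace Ω] (P : Measure Ω)
    (T : ℕ → Ω → Finset Vertex) (S : ℕ → Ω → Vertex) (ξ : ℕ → Ω → ℕ)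
    (h : IsTBRW ρ ν P T S ξ) :
    ∃ δ : ℝ, 0 < δ ∧ ∀ᵐ ω ∂P, ∀ᶠ k : ℕ in atTop,
      ENNReal.ofReal (Real.exp (δ * k)) ≤ tauE S k ω := by
  obtain ⟨θ, m₀, hθ, hβθ⟩ := exists_leafMean_pow_lt hν0
  have hb : 0 ≤ (ρ * m₀ + 2) / Real.log 2 := by
    have := Real.log_pos one_lt_two
    positivity
  refine ⟨(2 * ((ρ * m₀ + 2) / Real.log 2 + 1))⁻¹, by positivity, ?_⟩
  filter_upwards [h.ae_exists_leafRich hθ hβθ,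
    ae_all_iff.2 fun V => h.ae_eventually_crossCount_lt hρ.le m₀ V] with ω ⟨V, hV⟩ hcross
  exact exp_le_tauE_of_crossCount_lt hb (hcross V hV)

/-- **Lemma (exponential growth of the return times through the root loop).** If
`ρ > 1 + 2ν̄` (with `ν̄ < ∞`), there is a `δ > 0` such that almost surely
`τ_k ≥ e^{δk}` for all `k` large enough. -/
theorem tbrw_tau_exponential_growth
    (ρ : ℝ) (hρ : 0 < ρ) (ν : PMF ℕ) (hν0 : ν 0 < 1) (hnubar : nubar ν < ⊤)
    (hrec : 1 + 2 * nubar ν < ENNReal.ofReal ρ)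
    {Ω : Type*} [MeasurableSpace Ω] (P : Measure Ω)
    (T : ℕ → Ω → Finset Vertex) (S : ℕ → Ω → Vertex) (ξ : ℕ → Ω → ℕ)
    (h : IsTBRW ρ ν P T S ξ) :
    ∃ δ : ℝ, 0 < δ ∧ ∀ᵐ ω ∂P, ∀ᶠ k : ℕ in atTop,
      ENNReal.ofReal (Real.exp (δ * k)) ≤ tauE S k ω :=
  tbrw_tau_exponential_growth_general ρ hρ ν hν0 P T S ξ h

end TBRWPaper
end
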